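/- arXiv:1903.07178 — 7 statements merged into one kernel-verified Lean document; each statement's English description precedes it below -/
import Mathlib

section
/- For any integer k > 1, the greatest common divisor of the set of numbers { C(2k+1, 2i) - C(2k+1, 2i-1) : 0 < i ≤ k } equals m(2k+1)·m(2k), where C denotes the binomial coefficient. -/
open Classical in
/-- `mCF i = p` if `i + 1 = p ^ s` for some prime `p` and `s > 0`, and `1` otherwise. -/
noncomputable def mCF (i : ℕ) : ℕ :=
  if h : ∃ p : ℕ, p.Prime ∧ ∃ s : ℕ, 0 < s ∧ i + 1 = p ^ s then h.choose else 1

/-!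
With `F i = C(2k, 2i) - 1`, Pascal's rule gives `C(2k+1, 2i) - C(2k+1, 2i-1) = F i - F (i-1)`
and `F 0 = 0`, so the gcd in question is the gcd of the `F i`.

Row `n` of Pascal's triangle is `(-1)^j` modulo a prime `p` exactly when `n + 1` is a power
of `p` (Lucas). Since `C(2k, 2i) ≡ C(k, i) (mod 2)`, the prime `2` divides every `F i` iff
`k + 1`, i.e. `2k + 2`, is a power of `2`; an odd prime `p` does iff `2k + 1` is a power of `p`.
So the primes dividing the gcd are exactly those dividing `m(2k+1) m(2k)`.

No `p^2` divides every `F i`: `F 1 = (2k+1)(k-1)` settles all cases except `2k + 1 = p^(s+1)`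
with `s ≥ 1`, where `C(2k, p^s + 1) ≡ 1 - p (mod p^2)`. Hence the gcd and `m(2k+1) m(2k)`
are squarefree with the same prime factors.
-/

open Finset

theorem choose_succ_sub_choose_succ (n j : ℕ) :
    ((n + 1).choose (j + 2) : ℤ) - (n + 1).choose (j + 1) = n.choose (j + 2) - n.choose j := by
  rw [Nat.choose_succ_succ' n (j + 1), Nat.choose_succ_succ' n j]
  push_cast
  ring

theorem Finset.gcd_Icc_sub_eq {α : Type*} [CommRing α] [IsDomain α] [NormalizedGCDMonoid α]
    (f : ℕ → α) (hf : f 0 = 0) (n : ℕ) :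
    (Icc 1 n).gcd (fun i => f i - f (i - 1)) = (Icc 1 n).gcd f := by
  have hdvd : ∀ a : α,
      (∀ i ∈ Icc 1 n, a ∣ f i - f (i - 1)) ↔ ∀ i ∈ Icc 1 n, a ∣ f i := by
    intro a
    constructor
    · intro h i hi
      induction i with
      | zero => simp at hi
      | succ i ih =>
        have hfi : a ∣ f i := by
          rcases i.eq_zero_or_pos with rfl | hi0
          · exact hf ▸ dvd_zero a
          · exact ih (mem_Icc.mpr ⟨hi0, by have := (mem_Icc.mp hi).2; omega⟩)
        simpa using dvd_add (h (i + 1) hi) hfi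
    · intro h i hi
      refine dvd_sub (h i hi) ?_
      rcases (i - 1).eq_zero_or_pos with h0 | hpos
      · exact h0 ▸ hf ▸ dvd_zero a
      · exact h (i - 1) (mem_Icc.mpr ⟨hpos, by have := (mem_Icc.mp hi).2; omega⟩)
  refine dvd_antisymm_of_normalize_eq normalize_gcd normalize_gcd ?_ ?_
  · exact dvd_gcd_iff.mpr ((hdvd _).mp (dvd_gcd_iff.mp dvd_rfl))
  · exact dvd_gcd_iff.mpr ((hdvd _).mpr (dvd_gcd_iff.mp dvd_rfl))

theorem natCast_zmod_eq_one_iff_dvd {m n : ℕ} : (n : ZMod m) = 1 ↔ (m : ℤ) ∣ n - 1 := by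
  rw [← ZMod.intCast_eq_intCast_iff_dvd_sub, eq_comm]
  push_cast
  rfl

theorem cast_choose_eq_neg_one_pow_of_cast_succ_choose_eq_zero {R : Type*} [CommRing R]
    {n j : ℕ} (h : ∀ i, 0 < i → i ≤ j → ((n + 1).choose i : R) = 0) :
    (n.choose j : R) = (-1) ^ j := by
  induction j with
  | zero => simp
  | succ j ih =>
    have hpascal : ((n + 1).choose (j + 1) : R) = n.choose j + n.choose (j + 1) := by
      rw [Nat.choose_succ_succ', Nat.cast_add]
    rw [h (j + 1) j.succ_pos le_rfl, ih fun i hi hij => h i hi (by omega)] at hpascal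
    linear_combination -hpascal

theorem cast_choose_eq_cast_choose_mod_mul (p : ℕ) [Fact p.Prime] (n k : ℕ) :
    (n.choose k : ZMod p) = (n % p).choose (k % p) * (n / p).choose (k / p) := by
  exact_mod_cast (ZMod.natCast_eq_natCast_iff _ _ _).mpr
    Choose.choose_modEq_choose_mod_mul_choose_div_nat

theorem pow_dvd_choose_prime_pow {p n m i : ℕ} (hp : p.Prime) (hi0 : i ≠ 0) (hin : i ≤ p ^ n)
    (h : multiplicity p i + m ≤ n) : p ^ m ∣ (p ^ n).choose i := by
  apply pow_dvd_of_le_emultiplicity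
  rw [hp.emultiplicity_choose_prime_pow hin hi0]
  exact_mod_cast (by omega : m ≤ n - multiplicity p i)

section

variable {p : ℕ} [hp : Fact p.Prime]

theorem cast_choose_eq_neg_one_pow_of_succ_eq_pow {n t : ℕ} (ht : n + 1 = p ^ t) {j : ℕ}
    (hj : j ≤ n) : (n.choose j : ZMod p) = (-1) ^ j :=
  cast_choose_eq_neg_one_pow_of_cast_succ_choose_eq_zero fun i hi hij =>
    (ZMod.natCast_eq_zero_iff _ _).mpr <| ht ▸ hp.out.dvd_choose_pow hi.ne' (by omega)

theorem exists_succ_eq_pow_of_cast_choose_eq_neg_one_pow {n : ℕ}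
    (h : ∀ j ≤ n, (n.choose j : ZMod p) = (-1) ^ j) : ∃ t, n + 1 = p ^ t := by
  induction n using Nat.strong_induction_on with
  | _ n ih =>
  rcases n.eq_zero_or_pos with rfl | hn
  · exact ⟨0, rfl⟩
  have hp1 := hp.out.one_lt
  have hmod : n % p = p - 1 := by
    rcases lt_or_ge n p with hnp | hnp
    · have h1 := h 1 hn
      rw [Nat.choose_one_right, pow_one] at h1
      have hdvd : p ∣ n + 1 := (ZMod.natCast_eq_zero_iff _ _).mp (by push_cast [h1]; ring)
      have := Nat.le_of_dvd (by omega) hdvd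
      rw [Nat.mod_eq_of_lt hnp]
      omega
    · by_contra hne
      have := Nat.mod_lt n hp.out.pos
      have h1 := h (p - 1) (by omega)
      rw [cast_choose_eq_cast_choose_mod_mul, Nat.mod_eq_of_lt (by omega : p - 1 < p),
        Nat.div_eq_of_lt (by omega : p - 1 < p),
        Nat.choose_eq_zero_of_lt (by omega : n % p < p - 1)] at h1
      simpa using congrArg IsUnit h1
  have hdiv : ∀ w ≤ n / p, ((n / p).choose w : ZMod p) = (-1) ^ w := by
    intro w hw
    have h1 := h (p * w) ((Nat.mul_le_mul_left p hw).trans (Nat.mul_div_le n p))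
    rwa [cast_choose_eq_cast_choose_mod_mul, Nat.mul_mod_right,
      Nat.mul_div_cancel_left _ hp.out.pos, Nat.choose_zero_right, Nat.cast_one, one_mul,
      pow_mul, neg_one_pow_char] at h1
  obtain ⟨t, ht⟩ := ih (n / p) (Nat.div_lt_self hn hp1) hdiv
  have := Nat.div_add_mod n p
  refine ⟨t + 1, ?_⟩
  rw [pow_succ', ← ht, mul_add_one]
  omega

theorem cast_choose_eq_neg_one_pow_iff {n : ℕ} :
    (∀ j ≤ n, (n.choose j : ZMod p) = (-1) ^ j) ↔ ∃ t, n + 1 = p ^ t :=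
  ⟨exists_succ_eq_pow_of_cast_choose_eq_neg_one_pow,
    fun ⟨_, ht⟩ _ => cast_choose_eq_neg_one_pow_of_succ_eq_pow ht⟩

variable {s n : ℕ}

theorem cast_choose_eq_neg_one_pow_of_lt_pow (hn : n + 1 = p ^ (s + 1)) {j : ℕ}
    (hj : j < p ^ s) : (n.choose j : ZMod (p ^ 2)) = (-1) ^ j := by
  refine cast_choose_eq_neg_one_pow_of_cast_succ_choose_eq_zero fun i hi hij => ?_
  have hmult : multiplicity p i < s := by
    have := Nat.le_of_dvd hi (pow_multiplicity_dvd p i)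
    by_contra! hge
    have := Nat.pow_le_pow_right hp.out.pos hge
    omega
  rw [ZMod.natCast_eq_zero_iff, hn]
  exact pow_dvd_choose_prime_pow hp.out hi.ne'
    ((hij.trans hj.le).trans (Nat.pow_le_pow_right hp.out.pos s.le_succ)) (by omega)

-- `C(p^(s+1), p^s) = p * C(p^(s+1) - 1, p^s - 1)` is divisible by `p` only once, so the
-- alternating pattern of row `p^(s+1) - 1` modulo `p^2` breaks right after `p^s`.
theorem cast_choose_pow_add_one_eq (hp2 : p ≠ 2) (hs : 1 ≤ s) (hn : n + 1 = p ^ (s + 1)) :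
    (n.choose (p ^ s + 1) : ZMod (p ^ 2)) = 1 - p := by
  set q := p ^ s with hq
  have hq0 : 0 < q := pow_pos hp.out.pos s
  have hnq : n + 1 = p * q := by rw [hn, pow_succ']
  have hodd : Odd q := (hp.out.odd_of_ne_two hp2).pow
  have hcentral : (n + 1).choose q = p * n.choose (q - 1) := by
    have h := Nat.add_one_mul_choose_eq n (q - 1)
    rw [Nat.sub_add_cancel hq0, hnq] at h
    rw [hnq]
    exact Nat.eq_of_mul_eq_mul_right hq0 (by rw [← h]; ring)
  have hq_sub : (n.choose (q - 1) : ZMod (p ^ 2)) = 1 := by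
    rw [cast_choose_eq_neg_one_pow_of_lt_pow hn (by omega),
      (Nat.Odd.sub_odd hodd odd_one).neg_one_pow]
  have hq_eq : (n.choose q : ZMod (p ^ 2)) = p - 1 := by
    have h := congrArg (Nat.cast : ℕ → ZMod (p ^ 2)) (Nat.choose_succ_succ' n (q - 1))
    rw [Nat.sub_add_cancel hq0, hcentral] at h
    push_cast at h
    rw [hq_sub] at h
    linear_combination -h
  have hq_succ : ((n + 1).choose (q + 1) : ZMod (p ^ 2)) = 0 := by
    have hmult : multiplicity p (q + 1) = 0 := multiplicity_eq_zero.mpr fun h =>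
      hp.out.one_lt.ne' (Nat.dvd_one.mp ((Nat.dvd_add_right (dvd_pow_self p (by omega))).mp h))
    have hle : q + 1 ≤ p ^ (s + 1) := by
      rw [pow_succ']
      nlinarith [hp.out.two_le]
    rw [ZMod.natCast_eq_zero_iff, hn]
    exact pow_dvd_choose_prime_pow hp.out (by omega) hle (by omega)
  have h := congrArg (Nat.cast : ℕ → ZMod (p ^ 2)) (Nat.choose_succ_succ' n q)
  push_cast at h
  rw [hq_succ, hq_eq] at h
  linear_combination -h

end

theorem cast_choose_two_mul_two_sub_one (k : ℕ) :
    ((2 * k).choose 2 : ℤ) - 1 = (2 * k + 1) * (k - 1) := by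
  have h : (((2 * k).choose 2 : ℕ) : ℚ) = 2 * k * (2 * k - 1) / 2 := by
    rw [Nat.cast_choose_two]
    push_cast
    ring
  have h' : (((2 * k).choose 2 : ℤ) : ℚ) = (((2 * k + 1) * (k - 1) + 1 : ℤ) : ℚ) := by
    push_cast at h ⊢
    rw [h]
    ring
  linarith [Int.cast_injective (α := ℚ) h']

theorem forall_cast_choose_two_mul_eq_one_iff_two {k : ℕ} :
    (∀ i ≤ k, ((2 * k).choose (2 * i) : ZMod 2) = 1) ↔ ∃ t, k + 1 = 2 ^ t := by
  have h2 : ∀ i, ((2 * k).choose (2 * i) : ZMod 2) = k.choose i :=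
    fun i => (ZMod.natCast_eq_natCast_iff _ _ _).mpr Choose.choose_mul_mul_modEq_choose_nat
  have hneg : ∀ i, ((-1 : ZMod 2)) ^ i = 1 :=
    fun i => by rw [show (-1 : ZMod 2) = 1 from rfl, one_pow]
  simp only [h2, ← cast_choose_eq_neg_one_pow_iff (p := 2), hneg]

-- `j = p * w + w % 2` is even, and by Lucas `C(2k, j) = C(p - 1, w % 2) * C(2k / p, w)`.
theorem cast_choose_div_eq_neg_one_pow {p : ℕ} [hp : Fact p.Prime] (hp2 : p ≠ 2) {k : ℕ}
    (hmod : 2 * k % p = p - 1) (h : ∀ i ≤ k, ((2 * k).choose (2 * i) : ZMod p) = 1) {w : ℕ}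
    (hw : w ≤ 2 * k / p) : ((2 * k / p).choose w : ZMod p) = (-1) ^ w := by
  have hodd : p % 2 = 1 := hp.out.mod_two_eq_one_iff_ne_two.mpr hp2
  have hp1 := hp.out.one_lt
  have hpw : p * w % 2 = w % 2 := by rw [Nat.mul_mod, hodd, one_mul, Nat.mod_mod]
  have hle : p * w ≤ p * (2 * k / p) := Nat.mul_le_mul_left p hw
  have := Nat.div_add_mod (2 * k) p
  have h1 := h ((p * w + w % 2) / 2) (by omega)
  rw [show 2 * ((p * w + w % 2) / 2) = p * w + w % 2 by omega,
    cast_choose_eq_cast_choose_mod_mul, hmod, Nat.mul_add_mod,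
    Nat.mod_eq_of_lt (by omega : w % 2 < p), Nat.mul_add_div hp.out.pos,
    Nat.div_eq_of_lt (by omega : w % 2 < p), add_zero,
    cast_choose_eq_neg_one_pow_of_succ_eq_pow (t := 1) (by rw [pow_one]; omega) (by omega)] at h1
  have hsq : ((-1 : ZMod p) ^ (w % 2)) * (-1) ^ (w % 2) = 1 := by
    rw [← pow_add, ← two_mul, pow_mul, neg_one_sq, one_pow]
  rw [neg_one_pow_eq_pow_mod_two]
  linear_combination (-((2 * k / p).choose w : ZMod p)) * hsq + (-1) ^ (w % 2) * h1

theorem exists_pow_eq_of_cast_choose_two_mul_eq_one {p : ℕ} [hp : Fact p.Prime] (hp2 : p ≠ 2)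
    {k : ℕ} (hk : 2 ≤ k) (h : ∀ i ≤ k, ((2 * k).choose (2 * i) : ZMod p) = 1) :
    ∃ t, 2 * k + 1 = p ^ t := by
  have hodd : p % 2 = 1 := hp.out.mod_two_eq_one_iff_ne_two.mpr hp2
  rcases lt_or_ge (2 * k + 1) p with hlt | hge
  · exfalso
    have h1 : (p : ℤ) ∣ (2 * k + 1) * (k - 1) := by
      have h1 := h 1 (by omega)
      rw [mul_one] at h1
      rw [← cast_choose_two_mul_two_sub_one, ← ZMod.intCast_zmod_eq_zero_iff_dvd]
      push_cast
      rw [h1, sub_self]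
    rcases (Nat.prime_iff_prime_int.mp hp.out).dvd_or_dvd h1 with h1 | h1
    · have := Int.le_of_dvd (by omega) h1
      omega
    · have := Int.le_of_dvd (by omega) h1
      omega
  have hmod : 2 * k % p = p - 1 := by
    by_contra hne
    have := Nat.mod_lt (2 * k) hp.out.pos
    have h1 := h ((p - 1) / 2) (by omega)
    rw [show 2 * ((p - 1) / 2) = p - 1 by omega, cast_choose_eq_cast_choose_mod_mul,
      Nat.mod_eq_of_lt (by omega : p - 1 < p), Nat.div_eq_of_lt (by omega : p - 1 < p),
      Nat.choose_eq_zero_of_lt (by omega : 2 * k % p < p - 1)] at h1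
    simp at h1
  obtain ⟨t, ht⟩ := exists_succ_eq_pow_of_cast_choose_eq_neg_one_pow fun _ hw =>
    cast_choose_div_eq_neg_one_pow hp2 hmod h hw
  have := Nat.div_add_mod (2 * k) p
  refine ⟨t + 1, ?_⟩
  rw [pow_succ', ← ht, mul_add_one]
  omega

theorem forall_mem_Icc_dvd_choose_sub_one_iff {p k : ℕ} :
    (∀ i ∈ Icc 1 k, (p : ℤ) ∣ ((2 * k).choose (2 * i) : ℤ) - 1) ↔
      ∀ i ≤ k, ((2 * k).choose (2 * i) : ZMod p) = 1 := by
  simp only [← natCast_zmod_eq_one_iff_dvd, mem_Icc]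
  refine ⟨fun h i hi => ?_, fun h i hi => h i hi.2⟩
  rcases i.eq_zero_or_pos with rfl | hi0
  · simp
  · exact h i ⟨hi0, hi⟩

theorem not_four_dvd_choose_two_mul_two_sub_one {k t : ℕ} (hk : 2 ≤ k) (ht : k + 1 = 2 ^ t) :
    ¬ (2 : ℤ) ^ 2 ∣ ((2 * k).choose 2 : ℤ) - 1 := by
  have ht2 : 2 ≤ t := by
    by_contra! h
    interval_cases t <;> omega
  obtain ⟨c, hc⟩ : 2 ^ 2 ∣ k + 1 := ht ▸ pow_dvd_pow 2 ht2
  rw [cast_choose_two_mul_two_sub_one, show (k : ℤ) = 4 * c - 1 by omega,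
    show (2 * (4 * (c : ℤ) - 1) + 1) * (4 * c - 1 - 1) = 4 * (8 * c ^ 2 - 5 * c) + 2 by ring]
  intro h
  have := (Int.dvd_add_right (by norm_num [dvd_mul_right])).mp h
  norm_num at this

theorem exists_not_sq_dvd_choose_two_mul_sub_one {p : ℕ} (hp : p.Prime) {k : ℕ} (hk : 2 ≤ k) :
    ∃ i ∈ Icc 1 k, ¬ (p : ℤ) ^ 2 ∣ ((2 * k).choose (2 * i) : ℤ) - 1 := by
  have := Fact.mk hp
  by_cases hall : ∀ i ≤ k, ((2 * k).choose (2 * i) : ZMod p) = 1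
  swap
  · rw [← forall_mem_Icc_dvd_choose_sub_one_iff] at hall
    push Not at hall
    obtain ⟨i, hi, hndvd⟩ := hall
    exact ⟨i, hi, fun h => hndvd ((dvd_pow_self _ two_ne_zero).trans h)⟩
  have hk1 : (1 : ℕ) ∈ Icc 1 k := mem_Icc.mpr ⟨le_rfl, by omega⟩
  rcases eq_or_ne p 2 with rfl | hp2
  · obtain ⟨t, ht⟩ := forall_cast_choose_two_mul_eq_one_iff_two.mp hall
    exact ⟨1, hk1, by simpa using not_four_dvd_choose_two_mul_two_sub_one hk ht⟩
  obtain ⟨t, ht⟩ := exists_pow_eq_of_cast_choose_two_mul_eq_one hp2 hk hall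
  match t, ht with
  | 0, ht => rw [pow_zero] at ht; omega
  | 1, ht =>
    refine ⟨1, hk1, fun h => ?_⟩
    have hp' : (2 * k + 1 : ℤ) = p := by rw [pow_one] at ht; exact_mod_cast ht
    rw [mul_one, cast_choose_two_mul_two_sub_one, hp', sq] at h
    have := Int.le_of_dvd (by omega) (Int.dvd_of_mul_dvd_mul_left (by omega) h)
    omega
  | s + 2, ht =>
    have hodd : p ^ (s + 1) % 2 = 1 := Nat.odd_iff.mp (hp.odd_of_ne_two hp2).pow
    have hle : 3 * p ^ (s + 1) ≤ p ^ (s + 2) := by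
      rw [pow_succ' _ (s + 1)]
      exact Nat.mul_le_mul_right _ ((hp.two_le).lt_of_ne hp2.symm)
    refine ⟨(p ^ (s + 1) + 1) / 2, mem_Icc.mpr ⟨by omega, by omega⟩, fun h => ?_⟩
    have hpp : (p : ZMod (p ^ 2)) = 0 := by
      have h' := natCast_zmod_eq_one_iff_dvd.mpr (by exact_mod_cast h)
      rwa [show 2 * ((p ^ (s + 1) + 1) / 2) = p ^ (s + 1) + 1 by omega,
        cast_choose_pow_add_one_eq hp2 (by omega) ht, sub_eq_self] at h'
    have := Nat.le_of_dvd hp.pos ((ZMod.natCast_eq_zero_iff _ _).mp hpp)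
    nlinarith [hp.two_le]

theorem prime_dvd_mCF_iff {p i : ℕ} (hp : p.Prime) :
    p ∣ mCF i ↔ ∃ s, 0 < s ∧ i + 1 = p ^ s := by
  unfold mCF
  split_ifs with h
  · obtain ⟨hq, t, ht, hqt⟩ := h.choose_spec
    rw [Nat.prime_dvd_prime_iff_eq hp hq]
    refine ⟨by rintro rfl; exact ⟨t, ht, hqt⟩, fun ⟨s, hs, hps⟩ => ?_⟩
    have : p ∣ h.choose ^ t := hqt ▸ hps ▸ dvd_pow_self p hs.ne'
    exact (Nat.prime_dvd_prime_iff_eq hp hq).mp (hp.dvd_of_dvd_pow this)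
  · rw [Nat.dvd_one]
    exact ⟨fun h1 => absurd h1 hp.one_lt.ne',
      fun ⟨s, hs, hps⟩ => absurd ⟨p, hp, s, hs, hps⟩ h⟩

theorem squarefree_mCF (i : ℕ) : Squarefree (mCF i) := by
  unfold mCF
  split_ifs with h
  · exact h.choose_spec.1.prime.squarefree
  · exact squarefree_one

theorem coprime_mCF_mCF_succ (n : ℕ) : (mCF n).Coprime (mCF (n + 1)) :=
  Nat.coprime_of_dvd fun p hp h₁ h₂ => by
    obtain ⟨a, ha, hna⟩ := (prime_dvd_mCF_iff hp).mp h₁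
    obtain ⟨b, hb, hnb⟩ := (prime_dvd_mCF_iff hp).mp h₂
    have h₁ : p ∣ n + 1 := hna ▸ dvd_pow_self p ha.ne'
    have h₂ : p ∣ n + 1 + 1 := hnb ▸ dvd_pow_self p hb.ne'
    exact hp.one_lt.ne' (Nat.dvd_one.mp ((Nat.dvd_add_right h₁).mp h₂))

theorem prime_dvd_mCF_mul_iff {p k : ℕ} (hp : p.Prime) (hk : 2 ≤ k) :
    p ∣ mCF (2 * k + 1) * mCF (2 * k) ↔ ∀ i ≤ k, ((2 * k).choose (2 * i) : ZMod p) = 1 := by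
  have := Fact.mk hp
  rw [hp.dvd_mul, prime_dvd_mCF_iff hp, prime_dvd_mCF_iff hp]
  rcases eq_or_ne p 2 with rfl | hp2
  · rw [forall_cast_choose_two_mul_eq_one_iff_two]
    constructor
    · rintro (⟨s, hs, h⟩ | ⟨s, hs, h⟩)
      · obtain ⟨s, rfl⟩ : ∃ s', s = s' + 1 := ⟨s - 1, by omega⟩
        rw [pow_succ] at h
        exact ⟨s, by omega⟩
      · have : 2 ∣ 2 * k + 1 := h ▸ dvd_pow_self 2 hs.ne'
        omega
    · rintro ⟨t, ht⟩
      exact Or.inl ⟨t + 1, t.succ_pos, by rw [pow_succ]; omega⟩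
  · constructor
    · rintro (⟨s, hs, h⟩ | ⟨s, hs, h⟩)
      · have : p ^ s % 2 = 1 := Nat.odd_iff.mp (hp.odd_of_ne_two hp2).pow
        omega
      · intro i hi
        rw [cast_choose_eq_neg_one_pow_of_succ_eq_pow h (by omega), pow_mul, neg_one_sq, one_pow]
    · intro h
      obtain ⟨t, ht⟩ := exists_pow_eq_of_cast_choose_two_mul_eq_one hp2 hk h
      exact Or.inr ⟨t, Nat.pos_of_ne_zero (by rintro rfl; rw [pow_zero] at ht; omega), ht⟩

theorem gcd_binom_diff (k : ℕ) (hk : 1 < k) :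
    Finset.gcd (Finset.Icc 1 k)
      (fun i => ((2 * k + 1).choose (2 * i) : ℤ) - ((2 * k + 1).choose (2 * i - 1) : ℤ))
      = ((mCF (2 * k + 1) * mCF (2 * k) : ℕ) : ℤ) := by
  set F : ℕ → ℤ := fun i => ((2 * k).choose (2 * i) : ℤ) - 1 with hF
  have hdiff : ∀ i ∈ Icc 1 k,
      ((2 * k + 1).choose (2 * i) : ℤ) - (2 * k + 1).choose (2 * i - 1) = F i - F (i - 1) := by
    intro i hi
    obtain ⟨j, rfl⟩ : ∃ j, i = j + 1 := ⟨i - 1, by have := (mem_Icc.mp hi).1; omega⟩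
    rw [show 2 * (j + 1) = 2 * j + 2 by ring, show 2 * j + 2 - 1 = 2 * j + 1 by omega,
      choose_succ_sub_choose_succ, Nat.add_sub_cancel]
    simp only [hF, mul_add_one]
    ring
  rw [Finset.gcd_congr rfl hdiff, Finset.gcd_Icc_sub_eq F (by simp [hF])]
  set G := (Icc 1 k).gcd F
  have hG : G = G.natAbs :=
    (Int.natAbs_of_nonneg (Int.nonneg_of_normalize_eq_self normalize_gcd)).symm
  have hsqG : Squarefree G.natAbs := Nat.squarefree_iff_prime_squarefree.mpr fun p hp hpp => by
    obtain ⟨i, hi, hndvd⟩ := exists_not_sq_dvd_choose_two_mul_sub_one hp hk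
    exact hndvd ((sq (p : ℤ)).symm ▸ (Int.natCast_dvd.mpr hpp).trans (gcd_dvd hi))
  have hsqM : Squarefree (mCF (2 * k + 1) * mCF (2 * k)) :=
    (Nat.squarefree_mul (coprime_mCF_mCF_succ _).symm).mpr ⟨squarefree_mCF _, squarefree_mCF _⟩
  rw [hG, (Nat.Squarefree.ext_iff hsqG hsqM).mpr fun p hp => ?_]
  rw [← Int.natCast_dvd, Finset.dvd_gcd_iff, prime_dvd_mCF_mul_iff hp hk, hF,
    forall_mem_Icc_dvd_choose_sub_one_iff]
end

section
/- For any integer k > 2 and any odd prime p, the largest power of p dividing every number a_i = -C(2k,1) + C(2k,2) - ... - C(2k,2i-1) + C(2k,2i) - 2i, for 0 < i < k, is p if 2k+1 is a power of p, and 1 otherwise. -/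
open Finset

-- shift products on Icc to range
lemma prod_Icc_shift {M : Type*} [CommMonoid M] (f : ℕ → M) (a : ℕ) :
    ∀ r : ℕ, ∏ j ∈ Icc (a+1) (a+r), f j = ∏ i ∈ Finset.range r, f (a+1+i)
  | 0 => by simp
  | (r+1) => by
    have h : a + (r+1) = (a + r) + 1 := by omega
    rw [h, Finset.prod_Icc_succ_top (by omega), prod_Icc_shift f a r,
      Finset.prod_range_succ]
    have h2 : a + r + 1 = a + 1 + r := by omega
    rw [h2]

lemma factorial_eq_prod_Icc (n : ℕ) : Nat.factorial n = ∏ j ∈ Icc 1 n, j := by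
  have := prod_Icc_shift (fun j => j) 0 n
  simp only [Nat.zero_add] at this
  rw [this, ← Finset.prod_range_add_one_eq_factorial]
  exact Finset.prod_congr rfl fun i _ => by omega

lemma descFactorial_eq_prod_Icc (N a r : ℕ) :
    (N - (a+1)).descFactorial r = ∏ j ∈ Icc (a+1) (a+r), (N - j) := by
  rw [prod_Icc_shift, Nat.descFactorial_eq_prod_range]
  exact Finset.prod_congr rfl fun i _ => by omega

lemma filter_dvd_Icc_eq_image (p a b d : ℕ) (hp : 0 < p)
    (hmem : ∀ t : ℕ, (a ≤ p*t ∧ p*t ≤ b) ↔ (1 ≤ t ∧ t ≤ d)) :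
    (Icc a b).filter (fun j => p ∣ j) = (Icc 1 d).image (fun t => p*t) := by
  ext j
  simp only [mem_filter, mem_Icc, mem_image]
  constructor
  · rintro ⟨⟨h1, h2⟩, t, rfl⟩
    exact ⟨t, (hmem t).mp ⟨h1, h2⟩, rfl⟩
  · rintro ⟨t, ht, rfl⟩
    have := (hmem t).mpr ht
    exact ⟨this, ⟨t, rfl⟩⟩

lemma prod_split (p : ℕ) (hp : 0 < p) (f : ℕ → ℕ) (a b d : ℕ)
    (hmem : ∀ t : ℕ, (a ≤ p*t ∧ p*t ≤ b) ↔ (1 ≤ t ∧ t ≤ d)) :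
    ∏ j ∈ Icc a b, f j =
      (∏ j ∈ (Icc a b).filter (fun j => ¬ p ∣ j), f j) * ∏ t ∈ Icc 1 d, f (p*t) := by
  rw [← Finset.prod_filter_mul_prod_filter_not (Icc a b) (fun j => p ∣ j) f, mul_comm]
  congr 1
  rw [filter_dvd_Icc_eq_image p a b d hp hmem, Finset.prod_image]
  intro x _ y _ hxy
  exact Nat.eq_of_mul_eq_mul_left hp hxy

lemma card_filter_not_dvd (p a b d : ℕ) (hp : 0 < p)
    (hmem : ∀ t : ℕ, (a ≤ p*t ∧ p*t ≤ b) ↔ (1 ≤ t ∧ t ≤ d)) :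
    ((Icc a b).filter (fun j => ¬ p ∣ j)).card = (Icc a b).card - d := by
  have h1 := Finset.card_filter_add_card_filter_not
    (s := Icc a b) (p := fun j => p ∣ j)
  have h2 : ((Icc a b).filter (fun j => p ∣ j)).card = d := by
    rw [filter_dvd_Icc_eq_image p a b d hp hmem,
      Finset.card_image_of_injective _ (fun x y hxy => Nat.eq_of_mul_eq_mul_left hp hxy)]
    simp [Nat.card_Icc]
  omega

lemma prod_sub_mod (n : ℕ) (M : ℕ) (hM : (M : ZMod n) = 0) (S : Finset ℕ)
    (hub : ∀ j ∈ S, j ≤ M) :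
    ((∏ j ∈ S, (M - j) : ℕ) : ZMod n) = (-1)^(S.card) * ((∏ j ∈ S, j : ℕ) : ZMod n) := by
  rw [Nat.cast_prod, Nat.cast_prod]
  have : ∀ j ∈ S, ((M - j : ℕ) : ZMod n) = -(j : ZMod n) := by
    intro j hj
    rw [Nat.cast_sub (hub j hj), hM]
    ring
  rw [Finset.prod_congr rfl this]
  have : ∀ j ∈ S, -(j : ZMod n) = (-1) * (j : ZMod n) := fun j _ => by ring
  rw [Finset.prod_congr rfl this, Finset.prod_mul_distrib, Finset.prod_const]

section ModP2

variable {p : ℕ} (hp : p.Prime) (hodd : Odd p)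

include hp hodd in
lemma lemI (q d : ℕ) (hd1 : 1 ≤ d) (hdq : d < q) (hpq : p ∣ q) :
    (((p*q - 1).choose (p*d) : ℕ) : ZMod (p^2)) = (((q-1).choose d : ℕ) : ZMod (p^2)) := by
  have hp0 : 0 < p := hp.pos
  have hp2 : 2 ≤ p := hp.two_le
  have hmem : ∀ t : ℕ, (1 ≤ p*t ∧ p*t ≤ p*d) ↔ (1 ≤ t ∧ t ≤ d) := by
    intro t
    constructor
    · rintro ⟨h1, h2⟩
      have ht : t ≠ 0 := by rintro rfl; simp at h1
      exact ⟨Nat.one_le_iff_ne_zero.mpr ht, Nat.le_of_mul_le_mul_left h2 hp0⟩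
    · rintro ⟨h1, h2⟩
      exact ⟨Nat.mul_pos hp0 h1, Nat.mul_le_mul le_rfl h2⟩
  set S := (Icc 1 (p*d)).filter (fun j => ¬ p ∣ j) with hS
  set U := ∏ j ∈ S, j with hU
  set W := ∏ j ∈ S, (p*q - j) with hW
  -- main integer identity
  have E2 : (p*q - 1).descFactorial (p*d) = ∏ j ∈ Icc 1 (p*d), (p*q - j) := by
    have := descFactorial_eq_prod_Icc (p*q) 0 (p*d)
    simpa using this
  have E3 : ∏ j ∈ Icc 1 (p*d), (p*q - j) = W * (p^d * ((q-1).descFactorial d)) := by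
    rw [prod_split p hp0 _ 1 (p*d) d hmem]
    congr 1
    have h1 : ∀ t ∈ Icc 1 d, p*q - p*t = p*(q - t) := fun t _ => by
      rw [Nat.mul_sub_left_distrib]
    rw [Finset.prod_congr rfl h1, Finset.prod_mul_distrib, Finset.prod_const]
    have := descFactorial_eq_prod_Icc q 0 d
    simp only [Nat.zero_add] at this
    rw [Nat.card_Icc, this]
    simp
  have E4 : (p*d).factorial = U * (p^d * d.factorial) := by
    rw [factorial_eq_prod_Icc, prod_split p hp0 _ 1 (p*d) d hmem]
    congr 1
    rw [Finset.prod_mul_distrib, Finset.prod_const, Nat.card_Icc, factorial_eq_prod_Icc]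
    simp
  have hUC : U * ((p*q - 1).choose (p*d)) * (p^d * d.factorial)
      = W * ((q-1).choose d) * (p^d * d.factorial) := by
    calc U * ((p*q - 1).choose (p*d)) * (p^d * d.factorial)
        = (U * (p^d * d.factorial)) * ((p*q - 1).choose (p*d)) := by ring
      _ = (p*d).factorial * ((p*q - 1).choose (p*d)) := by rw [E4]
      _ = (p*q - 1).descFactorial (p*d) := (Nat.descFactorial_eq_factorial_mul_choose _ _).symm
      _ = W * (p^d * (d.factorial * ((q-1).choose d))) := by
          rw [E2, E3, Nat.descFactorial_eq_factorial_mul_choose]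
      _ = W * ((q-1).choose d) * (p^d * d.factorial) := by ring
  have hUC2 : U * ((p*q - 1).choose (p*d)) = W * ((q-1).choose d) :=
    Nat.eq_of_mul_eq_mul_right (by positivity) hUC
  -- now pass to ZMod (p^2)
  obtain ⟨c, rfl⟩ := hpq
  have hM : ((p*(p*c) : ℕ) : ZMod (p^2)) = 0 := by
    push_cast
    rw [← mul_assoc, ← sq]
    rw [show ((p:ZMod (p^2))^2) = ((p^2 : ℕ) : ZMod (p^2)) by push_cast; ring, ZMod.natCast_self]
    ring
  have hub : ∀ j ∈ S, j ≤ p*(p*c) := by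
    intro j hj
    rw [hS, mem_filter, mem_Icc] at hj
    have : p*d ≤ p*(p*c) := Nat.mul_le_mul le_rfl (by omega)
    omega
  have hWcast : ((W : ℕ) : ZMod (p^2)) = (-1)^(S.card) * ((U : ℕ) : ZMod (p^2)) :=
    prod_sub_mod (p^2) (p*(p*c)) hM S hub
  have hcard : S.card = p*d - d := by
    rw [hS, card_filter_not_dvd p 1 (p*d) d hp0 hmem, Nat.card_Icc]
    omega
  have heven : Even (S.card) := by
    rw [hcard, show p*d - d = (p-1)*d by rw [Nat.mul_sub_right_distrib]; omega]
    exact (Nat.Odd.sub_odd hodd odd_one).mul_right d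
  have hsign : ((-1 : ZMod (p^2)))^(S.card) = 1 := heven.neg_one_pow
  have hWU : ((W : ℕ) : ZMod (p^2)) = ((U : ℕ) : ZMod (p^2)) := by
    rw [hWcast, hsign, one_mul]
  -- U is a unit
  have hUnotdvd : ¬ p ∣ U := by
    have hcop : Nat.Coprime p U := by
      apply Nat.Coprime.prod_right
      intro j hj
      rw [hS, mem_filter] at hj
      exact (hp.coprime_iff_not_dvd).mpr hj.2
    exact hp.coprime_iff_not_dvd.mp hcop
  have hUunit : IsUnit ((U : ℕ) : ZMod (p^2)) := by
    rw [ZMod.isUnit_iff_coprime]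
    exact (((hp.coprime_iff_not_dvd).mpr hUnotdvd).symm).pow_right 2
  apply hUunit.mul_left_cancel
  have := congrArg (fun x : ℕ => (x : ZMod (p^2))) hUC2
  simp only [Nat.cast_mul] at this
  rw [this, hWU]


include hp hodd in
lemma lemII (d : ℕ) (hd1 : 1 ≤ d) :
    (((p*(p*d) - 2).choose (p*d + 1) : ℕ) : ZMod (p^2))
      = -(((p*d + 2 : ℕ)) : ZMod (p^2)) * (((p*d - 1).choose d : ℕ) : ZMod (p^2)) := by
  have hp0 : 0 < p := hp.pos
  have hp3 : 3 ≤ p := by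
    have := hp.two_le
    rcases Nat.lt_or_ge p 3 with h | h
    · interval_cases p
      · exact absurd hodd (by decide)
    · exact h
  set q := p * d with hq
  have hq3 : 3 ≤ q := by calc 3 = 3 * 1 := by ring
                            _ ≤ p * d := Nat.mul_le_mul hp3 hd1
  have hmem1 : ∀ t : ℕ, (2 ≤ p*t ∧ p*t ≤ q+2) ↔ (1 ≤ t ∧ t ≤ d) := by
    intro t
    constructor
    · rintro ⟨h1, h2⟩
      have ht : t ≠ 0 := by rintro rfl; simp at h1
      refine ⟨Nat.one_le_iff_ne_zero.mpr ht, ?_⟩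
      by_contra hcon
      have h3 : d + 1 ≤ t := by omega
      have : p * (d+1) ≤ p * t := Nat.mul_le_mul le_rfl h3
      have : p * d + p ≤ p * t := by rw [Nat.mul_add, Nat.mul_one] at this; omega
      omega
    · rintro ⟨h1, h2⟩
      have h3 : p * t ≤ p * d := Nat.mul_le_mul le_rfl h2
      have h4 : p * 1 ≤ p * t := Nat.mul_le_mul le_rfl h1
      omega
  have hmem2 : ∀ t : ℕ, (1 ≤ p*t ∧ p*t ≤ q+1) ↔ (1 ≤ t ∧ t ≤ d) := by
    intro t
    constructor
    · rintro ⟨h1, h2⟩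
      have ht : t ≠ 0 := by rintro rfl; simp at h1
      refine ⟨Nat.one_le_iff_ne_zero.mpr ht, ?_⟩
      by_contra hcon
      have h3 : d + 1 ≤ t := by omega
      have : p * (d+1) ≤ p * t := Nat.mul_le_mul le_rfl h3
      have : p * d + p ≤ p * t := by rw [Nat.mul_add, Nat.mul_one] at this; omega
      omega
    · rintro ⟨h1, h2⟩
      have h3 : p * t ≤ p * d := Nat.mul_le_mul le_rfl h2
      have h4 : p * 1 ≤ p * t := Nat.mul_le_mul le_rfl h1
      omega
  set S := (Icc 2 (q+2)).filter (fun j => ¬ p ∣ j) with hS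
  set S' := (Icc 1 (q+1)).filter (fun j => ¬ p ∣ j) with hS'
  set U := ∏ j ∈ S, j with hU
  set V := ∏ j ∈ S', j with hV
  set W := ∏ j ∈ S, (p*q - j) with hW
  have E2 : (p*q - 2).descFactorial (q+1) = ∏ j ∈ Icc 2 (q+2), (p*q - j) := by
    have := descFactorial_eq_prod_Icc (p*q) 1 (q+1)
    have h12 : 1 + (q+1) = q + 2 := by omega
    rw [h12] at this
    simpa using this
  have E3 : ∏ j ∈ Icc 2 (q+2), (p*q - j) = W * (p^d * ((q-1).descFactorial d)) := by
    rw [prod_split p hp0 _ 2 (q+2) d hmem1]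
    congr 1
    have h1 : ∀ t ∈ Icc 1 d, p*q - p*t = p*(q - t) := fun t _ => by
      rw [Nat.mul_sub_left_distrib]
    rw [Finset.prod_congr rfl h1, Finset.prod_mul_distrib, Finset.prod_const]
    have := descFactorial_eq_prod_Icc q 0 d
    simp only [Nat.zero_add] at this
    rw [Nat.card_Icc, this]
    simp
  have E4 : (q+1).factorial = V * (p^d * d.factorial) := by
    rw [factorial_eq_prod_Icc, prod_split p hp0 _ 1 (q+1) d hmem2]
    congr 1
    rw [Finset.prod_mul_distrib, Finset.prod_const, Nat.card_Icc, factorial_eq_prod_Icc]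
    simp
  have hUC : V * ((p*q - 2).choose (q+1)) * (p^d * d.factorial)
      = W * ((q-1).choose d) * (p^d * d.factorial) := by
    calc V * ((p*q - 2).choose (q+1)) * (p^d * d.factorial)
        = (V * (p^d * d.factorial)) * ((p*q - 2).choose (q+1)) := by ring
      _ = (q+1).factorial * ((p*q - 2).choose (q+1)) := by rw [E4]
      _ = (p*q - 2).descFactorial (q+1) := (Nat.descFactorial_eq_factorial_mul_choose _ _).symm
      _ = W * (p^d * (d.factorial * ((q-1).choose d))) := by
          rw [E2, E3, Nat.descFactorial_eq_factorial_mul_choose]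
      _ = W * ((q-1).choose d) * (p^d * d.factorial) := by ring
  have hUC2 : V * ((p*q - 2).choose (q+1)) = W * ((q-1).choose d) :=
    Nat.eq_of_mul_eq_mul_right (by positivity) hUC
  -- the U = (q+2) * V identity
  have hpq2 : ¬ p ∣ (q + 2) := by
    intro hcon
    have : p ∣ 2 := (Nat.dvd_add_right (Dvd.intro d rfl)).mp hcon
    have := Nat.le_of_dvd (by norm_num) this
    omega
  have hsplit1 : (Icc 1 (q+2)).filter (fun j => ¬ p ∣ j) = insert (q+2) S' := by
    have h1 : Icc 1 (q+2) = insert (q+2) (Icc 1 (q+1)) := by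
      ext x; simp only [mem_Icc, mem_insert]; omega
    rw [h1, Finset.filter_insert, if_pos hpq2]
  have hsplit2 : (Icc 1 (q+2)).filter (fun j => ¬ p ∣ j) = insert 1 S := by
    have h1 : Icc 1 (q+2) = insert 1 (Icc 2 (q+2)) := by
      ext x; simp only [mem_Icc, mem_insert]; omega
    rw [h1, Finset.filter_insert, if_pos (by simp [Nat.dvd_one]; exact hp.ne_one)]
  have hUV : U = (q+2) * V := by
    have h1 : ∏ j ∈ insert (q+2) S', j = (q+2) * V := by
      rw [Finset.prod_insert (by rw [hS', mem_filter, mem_Icc]; omega)]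
    have h2 : ∏ j ∈ insert 1 S, j = U := by
      rw [Finset.prod_insert (by rw [hS, mem_filter, mem_Icc]; omega), one_mul]
    rw [← h1, ← h2, ← hsplit1, ← hsplit2]
  -- cast to ZMod p^2
  have hM : ((p*q : ℕ) : ZMod (p^2)) = 0 := by
    rw [hq]
    push_cast
    rw [← mul_assoc, ← sq]
    rw [show ((p:ZMod (p^2))^2) = ((p^2 : ℕ) : ZMod (p^2)) by push_cast; ring, ZMod.natCast_self]
    ring
  have hub : ∀ j ∈ S, j ≤ p*q := by
    intro j hj
    rw [hS, mem_filter, mem_Icc] at hj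
    have : 3*q ≤ p*q := Nat.mul_le_mul hp3 le_rfl
    omega
  have hWcast : ((W : ℕ) : ZMod (p^2)) = (-1)^(S.card) * ((U : ℕ) : ZMod (p^2)) :=
    prod_sub_mod (p^2) (p*q) hM S hub
  have hcard : S.card = (q+1) - d := by
    rw [hS, card_filter_not_dvd p 2 (q+2) d hp0 hmem1, Nat.card_Icc]
    omega
  have hodds : Odd (S.card) := by
    have hpd : p * d - d = (p-1)*d := by rw [Nat.mul_sub_right_distrib]; omega
    have hle : d ≤ q := by calc d = 1 * d := by ring
                                _ ≤ p * d := Nat.mul_le_mul hp0 le_rfl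
    have : S.card = (p-1)*d + 1 := by rw [hcard, ← hpd]; omega
    rw [this]
    exact Even.add_one (((Nat.Odd.sub_odd hodd odd_one)).mul_right d)
  have hsign : ((-1 : ZMod (p^2)))^(S.card) = -1 := hodds.neg_one_pow
  have hWV : ((W : ℕ) : ZMod (p^2)) = -(((q+2 : ℕ)) : ZMod (p^2)) * ((V : ℕ) : ZMod (p^2)) := by
    rw [hWcast, hsign, hUV]
    push_cast
    ring
  have hVnotdvd : ¬ p ∣ V := by
    have hcop : Nat.Coprime p V := by
      apply Nat.Coprime.prod_right
      intro j hj
      rw [hS', mem_filter] at hj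
      exact (hp.coprime_iff_not_dvd).mpr hj.2
    exact hp.coprime_iff_not_dvd.mp hcop
  have hVunit : IsUnit ((V : ℕ) : ZMod (p^2)) := by
    rw [ZMod.isUnit_iff_coprime]
    exact (((hp.coprime_iff_not_dvd).mpr hVnotdvd).symm).pow_right 2
  apply hVunit.mul_left_cancel
  have := congrArg (fun x : ℕ => (x : ZMod (p^2))) hUC2
  simp only [Nat.cast_mul] at this
  rw [this, hWV]
  push_cast
  ring

include hp hodd in
lemma lemR : ∀ t : ℕ, (((p^(t+1) - 1).choose (p^t) : ℕ) : ZMod (p^2)) = ((p - 1 : ℕ) : ZMod (p^2))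
  | 0 => by simp [Nat.choose_one_right]
  | (t+1) => by
    have h1 : p^(t+2) = p * (p^(t+1)) := by ring
    have h2 : p^(t+1) = p * (p^t) := by ring
    have h3 : (1:ℕ) ≤ p^t := Nat.one_le_pow _ _ hp.pos
    have h4 : p^t < p^(t+1) := Nat.pow_lt_pow_succ hp.one_lt
    have := lemI hp hodd (p^(t+1)) (p^t) h3 h4 (dvd_pow_self p (Nat.succ_ne_zero t))
    rw [← h1, ← h2] at this
    rw [this]
    exact lemR t

include hp hodd in
lemma witness2 (s : ℕ) (hs : 2 ≤ s) :
    (((p^s - 2).choose (p^(s-1) + 1) : ℕ) : ZMod (p^2))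
      = -(((p^(s-1) + 2 : ℕ)) : ZMod (p^2)) * ((p - 1 : ℕ) : ZMod (p^2)) := by
  obtain ⟨s', rfl⟩ : ∃ s', s = s' + 2 := ⟨s - 2, by omega⟩
  have h3 : (1:ℕ) ≤ p^s' := Nat.one_le_pow _ _ hp.pos
  have hd : p^(s'+2) = p * (p * p^s') := by ring
  have hd2 : p^(s'+1) = p * p^s' := by ring
  rw [show s' + 2 - 1 = s' + 1 by omega, hd, hd2, lemII hp hodd (p^s') h3]
  have hR := lemR hp hodd s'
  rw [hd2] at hR
  rw [hR]


variable [Fact p.Prime]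

lemma lucasZ (n m : ℕ) : ((n.choose m : ℕ) : ZMod p)
    = (((n % p).choose (m % p) : ℕ) : ZMod p) * (((n / p).choose (m / p) : ℕ) : ZMod p) := by
  have h := Choose.choose_modEq_choose_mod_mul_choose_div (p := p) (n := n) (k := m)
  have h2 := (ZMod.intCast_eq_intCast_iff _ _ _).mpr h
  push_cast at h2 ⊢
  exact h2

include hp in
lemma divmodHelper (m c : ℕ) (hc1 : 1 ≤ c) (hcp : c ≤ p) :
    (p*(m+1) - c) / p = m ∧ (p*(m+1) - c) % p = p - c := by
  have hp0 : 0 < p := hp.pos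
  have h : p*(m+1) - c = p*m + (p - c) := by rw [Nat.mul_succ]; omega
  constructor
  · rw [h, Nat.mul_add_div hp0, Nat.div_eq_of_lt (by omega)]
    omega
  · rw [h, Nat.mul_add_mod, Nat.mod_eq_of_lt (by omega)]

include hp in
lemma lemA : ∀ r : ℕ, r ≤ p - 1 → (((p-1).choose r : ℕ) : ZMod p) = (-1)^r
  | 0 => by intro _; simp
  | (r+1) => by
    intro hr
    have hr' : r ≤ p - 1 := by omega
    have h2 := hp.two_le
    have hps : p - 1 + 1 = p := by omega
    have hid : (p-1+1).choose (r+1) = (p-1).choose r + (p-1).choose (r+1) :=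
      Nat.choose_succ_succ _ _
    rw [hps] at hid
    have hdvd : p ∣ p.choose (r+1) :=
      Nat.Prime.dvd_choose_self hp (Nat.succ_ne_zero r) (by omega)
    have h0 : ((p.choose (r+1) : ℕ) : ZMod p) = 0 :=
      (ZMod.natCast_eq_zero_iff _ _).mpr hdvd
    have hcast := congrArg (fun x : ℕ => (x : ZMod p)) hid
    simp only [Nat.cast_add] at hcast
    rw [h0] at hcast
    have hA := lemA r hr'
    rw [hA] at hcast
    rw [pow_succ]
    linear_combination -hcast

include hp hodd in
lemma lemB : ∀ r : ℕ, r ≤ p - 1 →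
    (((p-2).choose r : ℕ) : ZMod p) = (-1)^r * ((r+1 : ℕ) : ZMod p)
  | 0 => by intro _; simp
  | (r+1) => by
    intro hr
    have hr' : r ≤ p - 1 := by omega
    have hp3 : 3 ≤ p := by
      have := hp.two_le
      rcases Nat.lt_or_ge p 3 with h | h
      · interval_cases p
        · exact absurd hodd (by decide)
      · exact h
    have hps : p - 2 + 1 = p - 1 := by omega
    have hid : (p-2+1).choose (r+1) = (p-2).choose r + (p-2).choose (r+1) :=
      Nat.choose_succ_succ _ _
    rw [hps] at hid
    have hcast := congrArg (fun x : ℕ => (x : ZMod p)) hid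
    simp only [Nat.cast_add] at hcast
    rw [lemA hp (r+1) hr, lemB r hr'] at hcast
    have : (((p-2).choose (r+1) : ℕ) : ZMod p)
        = (-1)^(r+1) - (-1)^r * ((r+1 : ℕ) : ZMod p) := by
      linear_combination -hcast
    rw [this]
    push_cast
    ring

include hodd in
lemma negpow (q : ℕ) : ((-1 : ZMod p))^q = (-1)^(q / p) * (-1)^(q % p) := by
  conv_lhs => rw [← Nat.div_add_mod q p]
  rw [pow_add, pow_mul, hodd.neg_one_pow]

include hp hodd in
lemma lemD : ∀ (t m : ℕ), m ≤ p^t - 1 → (((p^t - 1).choose m : ℕ) : ZMod p) = (-1)^m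
  | 0, m => by
    intro h
    have : m = 0 := by simpa using h
    subst this
    simp
  | (t+1), m => by
    intro hm
    have hpt : 1 ≤ p^t := Nat.one_le_pow _ _ hp.pos
    have hpow : p^(t+1) = p*((p^t - 1)+1) := by
      rw [Nat.sub_add_cancel hpt]; ring
    obtain ⟨hdiv, hmod⟩ := divmodHelper hp (p^t - 1) 1 le_rfl hp.one_lt.le
    rw [lucasZ, hpow, hdiv, hmod]
    have hmd : m / p ≤ p^t - 1 := by
      have h1 : m ≤ p^(t+1) - 1 := hm
      have := Nat.div_le_div_right (c := p) h1
      rw [hpow, hdiv] at this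
      exact this
    rw [lemA hp (m % p) (by have := Nat.mod_lt m hp.pos; omega),
      lemD t (m / p) hmd, negpow hodd m]
    ring

include hp hodd in
lemma lemC (s m : ℕ) (hs : 1 ≤ s) (hm : m ≤ p^s - 2) :
    (((p^s - 2).choose m : ℕ) : ZMod p) = ((m % p + 1 : ℕ) : ZMod p) * (-1)^m := by
  obtain ⟨s', rfl⟩ : ∃ s', s = s' + 1 := ⟨s - 1, by omega⟩
  have hpt : 1 ≤ p^s' := Nat.one_le_pow _ _ hp.pos
  have hp3 : 3 ≤ p := by
    have := hp.two_le
    rcases Nat.lt_or_ge p 3 with h | h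
    · interval_cases p
      · exact absurd hodd (by decide)
    · exact h
  have hpow : p^(s'+1) = p*((p^s' - 1)+1) := by
    rw [Nat.sub_add_cancel hpt]; ring
  obtain ⟨hdiv, hmod⟩ := divmodHelper hp (p^s' - 1) 2 (by omega) (by omega)
  rw [lucasZ, hpow, hdiv, hmod]
  have hmd : m / p ≤ p^s' - 1 := by
    have h1 : m ≤ p^(s'+1) - 2 := hm
    have := Nat.div_le_div_right (c := p) h1
    rw [hpow, hdiv] at this
    exact this
  have hmp : m % p ≤ p - 1 := by have := Nat.mod_lt m hp.pos; omega
  rw [lemB hp hodd (m % p) hmp, lemD hp hodd s' (m / p) hmd, negpow hodd m]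
  ring

include hp hodd in
lemma lemE : ∀ (e u : ℕ), 1 ≤ u →
    (((p^e * u - 1).choose (2*p^e - 1) : ℕ) : ZMod p) = (u : ZMod p) - 1
  | 0, u => by
    intro hu
    simp only [pow_zero, one_mul, mul_one]
    rw [show 2 - 1 = 1 by omega, Nat.choose_one_right, Nat.cast_sub hu, Nat.cast_one]
  | (e+1), u => by
    intro hu
    have h1 : 1 ≤ p^e * u := Nat.mul_pos (Nat.one_le_pow _ _ hp.pos) hu
    have h2 : 1 ≤ 2 * p^e := by have := Nat.one_le_pow e p hp.pos; omega
    have hpow1 : p^(e+1) * u = p * ((p^e * u - 1) + 1) := by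
      rw [Nat.sub_add_cancel h1]; ring
    have hpow2 : 2 * p^(e+1) = p * ((2 * p^e - 1) + 1) := by
      rw [Nat.sub_add_cancel h2]; ring
    obtain ⟨hdiv1, hmod1⟩ := divmodHelper hp (p^e * u - 1) 1 le_rfl hp.one_lt.le
    obtain ⟨hdiv2, hmod2⟩ := divmodHelper hp (2 * p^e - 1) 1 le_rfl hp.one_lt.le
    rw [lucasZ, hpow1, hpow2, hdiv1, hmod1, hdiv2, hmod2, Nat.choose_self]
    rw [lemE e u hu]
    simp

include hp hodd in
lemma lemF (e u : ℕ) (he : 1 ≤ e) (hu : 1 ≤ u) :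
    (((p^e * u - 2).choose (2*p^e - 2) : ℕ) : ZMod p) = (u : ZMod p) - 1 := by
  obtain ⟨e', rfl⟩ : ∃ e', e = e' + 1 := ⟨e - 1, by omega⟩
  have hp3 : 3 ≤ p := by
    have := hp.two_le
    rcases Nat.lt_or_ge p 3 with h | h
    · interval_cases p
      · exact absurd hodd (by decide)
    · exact h
  have h1 : 1 ≤ p^e' * u := Nat.mul_pos (Nat.one_le_pow _ _ hp.pos) hu
  have h2 : 1 ≤ 2 * p^e' := by have := Nat.one_le_pow e' p hp.pos; omega
  have hpow1 : p^(e'+1) * u = p * ((p^e' * u - 1) + 1) := by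
    rw [Nat.sub_add_cancel h1]; ring
  have hpow2 : 2 * p^(e'+1) = p * ((2 * p^e' - 1) + 1) := by
    rw [Nat.sub_add_cancel h2]; ring
  obtain ⟨hdiv1, hmod1⟩ := divmodHelper hp (p^e' * u - 1) 2 (by omega) (by omega)
  obtain ⟨hdiv2, hmod2⟩ := divmodHelper hp (2 * p^e' - 1) 2 (by omega) (by omega)
  rw [lucasZ, hpow1, hpow2, hdiv1, hmod1, hdiv2, hmod2, Nat.choose_self]
  rw [lemE hp hodd e' u hu]
  simp

end ModP2

lemma altsum (n : ℕ) : ∀ M : ℕ,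
    ∑ j ∈ Icc 1 M, (-1:ℤ)^j * (((n+1).choose j : ℕ) : ℤ)
      = (-1)^M * ((n.choose M : ℕ) : ℤ) - 1
  | 0 => by simp
  | (M+1) => by
    rw [Finset.sum_Icc_succ_top (by omega), altsum n M, Nat.choose_succ_succ]
    push_cast
    ring

theorem odd_prime_power_dividing (k : ℕ) (hk : 2 < k) (p : ℕ) (hp : p.Prime) (hodd : Odd p)
    (a : ℕ → ℤ)
    (ha : ∀ i, a i = (∑ j ∈ Finset.Icc 1 (2 * i), (-1 : ℤ) ^ j * ((2 * k).choose j : ℤ))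
      - 2 * i) :
    ((∃ s : ℕ, 2 * k + 1 = p ^ s) →
      (∀ i, 0 < i → i < k → (p : ℤ) ∣ a i) ∧
      ¬ (∀ i, 0 < i → i < k → ((p : ℤ) ^ 2) ∣ a i)) ∧
    (¬ (∃ s : ℕ, 2 * k + 1 = p ^ s) →
      ¬ (∀ i, 0 < i → i < k → (p : ℤ) ∣ a i)) := by
  haveI : Fact p.Prime := ⟨hp⟩
  have hp3 : 3 ≤ p := by
    have := hp.two_le
    rcases Nat.lt_or_ge p 3 with h | h
    · interval_cases p
      · exact absurd hodd (by decide)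
    · exact h
  have ha' : ∀ i : ℕ, a i = (((2*k-1).choose (2*i) : ℕ) : ℤ) - 1 - 2*(i:ℤ) := by
    intro i
    have hA := altsum (2*k-1) (2*i)
    rw [show (2*k-1)+1 = 2*k by omega] at hA
    rw [ha i, hA, show ((-1:ℤ))^(2*i) = 1 by rw [pow_mul]; norm_num]
    ring
  constructor
  · rintro ⟨s, hs⟩
    have hs1 : 1 ≤ s := by
      rcases Nat.eq_zero_or_pos s with rfl | h
      · simp at hs; omega
      · exact h
    have h2k1 : 2*k - 1 = p^s - 2 := by omega
    constructor
    · -- p divides every a i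
      intro i hi0 hik
      rw [ha' i, ← ZMod.intCast_zmod_eq_zero_iff_dvd]
      push_cast
      rw [h2k1, lemC hp hodd s (2*i) hs1 (by omega : 2*i ≤ p^s - 2)]
      rw [show ((-1 : ZMod p))^(2*i) = 1 by rw [pow_mul]; norm_num]
      push_cast [ZMod.natCast_mod]
      ring
    · -- p^2 does not divide every a i
      intro hall
      rcases Nat.lt_or_ge s 2 with hs2 | hs2
      · -- s = 1
        have hs1' : s = 1 := by omega
        subst hs1'
        rw [pow_one] at hs
        have hd := hall 1 (by omega) (by omega)
        have hc2 : (((2*k-1).choose 2 : ℕ) : ℤ) * 2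
            = (2*(k:ℤ) - 1) * ((2*(k:ℤ) - 1) - 1) := by
          have h := Nat.choose_succ_right_eq (2*k-1) 1
          rw [Nat.choose_one_right] at h
          have h2 := congrArg (fun y : ℕ => (y : ℤ)) h
          simp only [Nat.cast_mul] at h2
          rw [Nat.cast_sub (show 1 ≤ 2*k-1 by omega),
            Nat.cast_sub (show 1 ≤ 2*k by omega)] at h2
          push_cast at h2
          linear_combination h2
        have hp2k : (p:ℤ) = 2*(k:ℤ)+1 := by exact_mod_cast congrArg (Nat.cast (R := ℤ)) hs.symm
        have ha1 : a 1 = (p:ℤ) * ((k:ℤ) - 2) := by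
          apply mul_right_cancel₀ (b := (2:ℤ)) two_ne_zero
          rw [ha' 1, hp2k, show (2:ℕ)*1 = 2 from rfl]
          push_cast
          linear_combination hc2
        rw [ha1, sq] at hd
        have hdvd2 : (p:ℤ) ∣ ((k:ℤ) - 2) :=
          (mul_dvd_mul_iff_left (show (p:ℤ) ≠ 0 by exact_mod_cast hp.ne_zero)).mp hd
        rw [show ((k:ℤ) - 2) = ((k - 2 : ℕ) : ℤ) by
          rw [Nat.cast_sub (by omega)]; push_cast; ring] at hdvd2
        have := Nat.le_of_dvd (by omega) (Int.natCast_dvd_natCast.mp hdvd2)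
        omega
      · -- s ≥ 2
        obtain ⟨c, hc⟩ := (hodd.pow : Odd (p^(s-1)))
        have hpe : p ≤ p^(s-1) := Nat.le_self_pow (by omega) p
        have hpq : p * p^(s-1) = p^s := by
          rw [← pow_succ']; congr 1; omega
        have h3q : 3*p^(s-1) ≤ p*p^(s-1) := Nat.mul_le_mul hp3 le_rfl
        have hik : c + 1 < k := by omega
        have h2i : 2*(c+1) = p^(s-1) + 1 := by omega
        have h0 : ((a (c+1) : ℤ) : ZMod (p^2)) = 0 := by
          rw [ZMod.intCast_zmod_eq_zero_iff_dvd]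
          push_cast
          exact hall (c+1) (by omega) hik
        rw [ha' (c+1)] at h0
        rw [h2i, show 2*k-1 = p^s - 2 by omega] at h0
        push_cast at h0
        rw [witness2 hp hodd s hs2, Nat.cast_sub hp.one_le] at h0
        have h2c : ((2*(c+1) : ℕ) : ZMod (p^2)) = ((p^(s-1) : ℕ) : ZMod (p^2)) + 1 := by
          rw [h2i]; push_cast; ring
        push_cast at h2c
        have hgoal : (((p^(s-1)+2) * p : ℕ) : ZMod (p^2)) = 0 := by
          push_cast
          push_cast at h0
          linear_combination -h0 - h2c
        have hnat : p^2 ∣ (p^(s-1)+2) * p := (ZMod.natCast_eq_zero_iff _ _).mp hgoal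
        obtain ⟨w, hw⟩ := hnat
        have hpw : p^(s-1)+2 = p*w := by
          apply Nat.eq_of_mul_eq_mul_right hp.pos
          rw [hw]; ring
        have hdvd2 : p ∣ p^(s-1) + 2 := ⟨w, hpw⟩
        have hdvdq : p ∣ p^(s-1) := dvd_pow_self p (by omega)
        have : p ∣ 2 := (Nat.dvd_add_right hdvdq).mp hdvd2
        have := Nat.le_of_dvd (by norm_num) this
        omega
  · -- converse
    intro hnot hall
    have hCg : ∀ i, 0 < i → i < k →
        (((2*k-1).choose (2*i) : ℕ) : ZMod p) = 2*(i : ZMod p) + 1 := by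
      intro i h1 h2
      have h0 : ((a i : ℤ) : ZMod p) = 0 := by
        rw [ZMod.intCast_zmod_eq_zero_iff_dvd]
        exact_mod_cast hall i h1 h2
      rw [ha' i] at h0
      push_cast at h0
      linear_combination h0
    set x : ZMod p := ((2*k-1 : ℕ) : ZMod p) with hx
    have hratio : ∀ j : ℕ, j ≤ 2*k-1 →
        (((2*k-1).choose (j+1) : ℕ) : ZMod p) * ((j:ZMod p)+1)
          = (((2*k-1).choose j : ℕ) : ZMod p) * (x - (j:ZMod p)) := by
      intro j hj
      have h := Nat.choose_succ_right_eq (2*k-1) j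
      have h2 := congrArg (fun y : ℕ => (y : ZMod p)) h
      simp only [Nat.cast_mul] at h2
      rw [Nat.cast_sub hj] at h2
      push_cast at h2
      rw [← hx] at h2
      linear_combination h2
    have hc1x : (((2*k-1).choose 1 : ℕ) : ZMod p) = x := by rw [Nat.choose_one_right]
    have h1 := hCg 1 (by omega) (by omega)
    have h2 := hCg 2 (by omega) (by omega)
    have r1 := hratio 1 (by omega)
    have r2 := hratio 2 (by omega)
    have r3 := hratio 3 (by omega)
    have e1 : (6 : ZMod p) = x*(x-1) := by
      push_cast at h1 r1
      linear_combination r1 + (x-1)*hc1x - 2*h1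
    have e2 : (60 : ZMod p) = 3*((x-2)*(x-3)) := by
      push_cast at h1 h2 r2 r3
      linear_combination (x-3)*r2 + 3*r3 + (x-2)*(x-3)*h1 - 12*h2
    have hxval : x + 2 = ((2*k+1 : ℕ) : ZMod p) := by
      rw [hx, show (2*k+1 : ℕ) = (2*k-1) + 2 by omega]
      push_cast
      ring
    by_cases hT : ((2*k+1 : ℕ) : ZMod p) = 0
    · -- p ∣ 2k+1
      have hdvdT : p ∣ 2*k+1 := (ZMod.natCast_eq_zero_iff _ _).mp hT
      set e := (2*k+1).factorization p with he'
      have he : 0 < e := hp.factorization_pos_of_dvd (by omega) hdvdT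
      set u := (2*k+1) / p^e with hu'
      have hue : p^e * u = 2*k+1 := Nat.ordProj_mul_ordCompl_eq_self (2*k+1) p
      have hu : ¬ p ∣ u := Nat.not_dvd_ordCompl hp (by omega)
      have hu1 : 1 ≤ u := Nat.pos_of_ne_zero (by intro h; rw [h, mul_zero] at hue; omega)
      have hu2 : u ≠ 1 := by
        intro h
        rw [h, mul_one] at hue
        exact hnot ⟨e, hue.symm⟩
      have hpe : p ≤ p^e := Nat.le_self_pow (by omega) p
      have hue2 : p^e * 2 ≤ p^e * u := Nat.mul_le_mul le_rfl (by omega)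
      have hCi := hCg (p^e - 1) (by omega) (by omega)
      rw [show 2*(p^e - 1) = 2*p^e - 2 by omega,
        show 2*k-1 = p^e * u - 2 by omega,
        lemF hp hodd e u he hu1] at hCi
      rw [Nat.cast_sub (show 1 ≤ p^e by omega)] at hCi
      rw [show ((p^e : ℕ) : ZMod p) = 0 by
        push_cast; rw [ZMod.natCast_self]; exact zero_pow (by omega)] at hCi
      have : (u : ZMod p) = 0 := by push_cast at hCi; linear_combination hCi
      exact hu ((ZMod.natCast_eq_zero_iff _ _).mp this)
    · -- p ∤ 2k+1
      have htne : x + 2 ≠ 0 := by rw [hxval]; exact hT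
      have e1' : (x+2)*(x-3) = 0 := by linear_combination -e1
      have hx3 : x = 3 := by
        rcases mul_eq_zero.mp e1' with h | h
        · exact absurd h htne
        · linear_combination h
      have h60 : (60 : ZMod p) = 0 := by rw [hx3] at e2; simpa using e2
      have hdvd60 : p ∣ 60 := by
        have : ((60 : ℕ) : ZMod p) = 0 := by exact_mod_cast h60
        exact (ZMod.natCast_eq_zero_iff _ _).mp this
      have hp5 : ¬ p ∣ 5 := by
        intro hcon
        have : ((5 : ℕ) : ZMod p) = 0 := (ZMod.natCast_eq_zero_iff _ _).mpr hcon
        rw [hx3] at htne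
        apply htne
        norm_num at this ⊢
        exact this
      have h415 : p ∣ 4 * 15 := by norm_num; exact hdvd60
      have hp3' : p = 3 := by
        rcases (Nat.Prime.dvd_mul hp).mp h415 with h | h
        · exfalso
          have : p ∣ 2 := hp.dvd_of_dvd_pow (n := 2) (by norm_num; exact h)
          have := (Nat.prime_dvd_prime_iff_eq hp Nat.prime_two).mp this
          rw [this] at hodd
          exact absurd hodd (by decide)
        · rcases (Nat.Prime.dvd_mul hp).mp (show p ∣ 3 * 5 by norm_num; exact h) with h' | h'
          · exact (Nat.prime_dvd_prime_iff_eq hp (by norm_num)).mp h'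
          · exact absurd h' hp5
      subst hp3'
      rcases Nat.eq_or_lt_of_le (show 3 ≤ k by omega) with hk3 | hk4
      · -- k = 3
        have hcast : ((2*k-1 : ℕ) : ZMod 3) = ((3:ℕ) : ZMod 3) := by
          rw [← hx, hx3]; norm_num
        have hmod := (ZMod.natCast_eq_natCast_iff _ _ _).mp hcast
        rw [Nat.ModEq] at hmod
        omega
      · -- k ≥ 4
        have h3 := hCg 3 (by omega) (by omega)
        have r4 := hratio 4 (by omega)
        have r5 := hratio 5 (by omega)
        have e3 : (210 : ZMod 3) = 5*((x-4)*(x-5)) := by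
          push_cast at h2 h3 r4 r5
          linear_combination (x-5)*r4 + 5*r5 + (x-4)*(x-5)*h2 - 30*h3
        rw [hx3] at e3
        have h200 : ((200 : ℕ) : ZMod 3) = 0 := by
          push_cast
          linear_combination e3
        have := (ZMod.natCast_eq_zero_iff 200 3).mp h200
        norm_num at this
end

section
/- For any integer n ≥ 3, the greatest common divisor, over all partitions ω = (i_1,...,i_k) of n into positive parts each of size at most n-2, of the numbers α(ω) = (n!/(i_1!···i_k!)) · (i_1+1)^{i_1} ··· (i_k+1)^{i_k}, equals g(n), where g(n) = -48 if n = 3 (so the gcd is 48 for n = 3), g(n) = 2·m(n-1)·m(n-2) if n > 3 is odd, and g(n) = m(n-1)·m(n-2) if n > 3 is even. -/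
open scoped Nat

theorem mCF_dvd {i a : ℕ} (h : ∀ p s, p.Prime → 0 < s → i + 1 = p ^ s → p ∣ a) : mCF i ∣ a := by
  unfold mCF
  split_ifs with hex
  · obtain ⟨hp, s, hs, hi⟩ := hex.choose_spec
    exact h _ s hp hs hi
  · exact one_dvd a

theorem mCF_eq {i p s : ℕ} (hp : p.Prime) (hs : 0 < s) (hi : i + 1 = p ^ s) : mCF i = p := by
  have hex : ∃ q : ℕ, q.Prime ∧ ∃ t : ℕ, 0 < t ∧ i + 1 = q ^ t := ⟨p, hp, s, hs, hi⟩
  obtain ⟨hq, t, ht, hqt⟩ := hex.choose_spec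
  have hdvd : hex.choose ∣ p ^ s := hqt.symm.trans hi ▸ dvd_pow_self _ ht.ne'
  rw [mCF, dif_pos hex]
  exact (Nat.prime_dvd_prime_iff_eq hq hp).1 (hq.dvd_of_dvd_pow hdvd)

theorem mCF_dvd_succ (i : ℕ) : mCF i ∣ i + 1 :=
  mCF_dvd fun p _ _ hs hi => hi ▸ dvd_pow_self p hs.ne'

theorem Nat.digits_sum_base_pow {b : ℕ} (hb : 1 < b) (k : ℕ) : (b.digits (b ^ k)).sum = 1 := by
  have h := Nat.digits_base_pow_mul hb (k := k) one_pos
  rw [mul_one, Nat.digits_of_lt b 1 one_ne_zero hb] at h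
  simp [h]

theorem Nat.not_dvd_mul_add_one {p : ℕ} (hp : 1 < p) (k : ℕ) : ¬ p ∣ p * k + 1 := by
  rw [Nat.dvd_add_right (dvd_mul_right p k)]
  exact Nat.not_dvd_of_pos_of_lt one_pos hp

theorem Nat.dvd_of_forall_prime_exists_pow_padicValNat_dvd {ι : Type*} {P : ι → Prop}
    (a : ι → ℕ) {g d : ℕ} (ha : ∀ i, P i → a i ≠ 0)
    (hg : ∀ p, p.Prime → ∃ i, P i ∧ p ^ padicValNat p (a i) ∣ g)
    (hd : ∀ i, P i → d ∣ a i) : d ∣ g := by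
  refine (Nat.dvd_iff_prime_pow_dvd_dvd g d).2 fun p k hp hpk => ?_
  have := Fact.mk hp
  obtain ⟨i, hi, hdvd⟩ := hg p hp
  have hk := (padicValNat_dvd_iff_le (ha i hi)).1 (hpk.trans (hd i hi))
  exact (pow_dvd_pow p hk).trans hdvd

section Legendre

variable {p : ℕ} [Fact p.Prime]

theorem sub_one_mul_padicValNat_factorial_add_digits_sum (n : ℕ) :
    (p - 1) * padicValNat p n ! + (p.digits n).sum = n := by
  rw [sub_one_mul_padicValNat_factorial]
  exact Nat.sub_add_cancel (Nat.digit_sum_le p n)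

theorem sub_one_mul_padicValNat_choose_add_digits_sum (a b : ℕ) :
    (p - 1) * padicValNat p ((a + b).choose a) + (p.digits (a + b)).sum =
      (p.digits a).sum + (p.digits b).sum := by
  have h := congrArg (fun m => (p - 1) * padicValNat p m)
    (Nat.choose_mul_factorial_mul_factorial (Nat.le_add_right a b))
  simp only [Nat.add_sub_cancel_left] at h
  rw [padicValNat.mul (Nat.mul_pos (Nat.choose_pos (Nat.le_add_right a b))
      (Nat.factorial_pos a)).ne' (Nat.factorial_ne_zero b),
    padicValNat.mul (Nat.choose_pos (Nat.le_add_right a b)).ne' (Nat.factorial_ne_zero a),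
    mul_add, mul_add] at h
  have ha := sub_one_mul_padicValNat_factorial_add_digits_sum (p := p) a
  have hb := sub_one_mul_padicValNat_factorial_add_digits_sum (p := p) b
  have hab := sub_one_mul_padicValNat_factorial_add_digits_sum (p := p) (a + b)
  omega

end Legendre

namespace Multiset

theorem multinomial_mul_prod_factorial (m : Multiset ℕ) :
    m.multinomial * (m.map Nat.factorial).prod = m.sum ! := by
  induction m using Multiset.induction_on with
  | empty => simp
  | cons x m ih =>
    rw [multinomial_cons, map_cons, prod_cons, sum_cons,
      ← Nat.choose_mul_factorial_mul_factorial (Nat.le_add_right x m.sum),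
      Nat.add_sub_cancel_left, ← ih]
    ring

theorem multinomial_eq_factorial_div (m : Multiset ℕ) :
    m.multinomial = m.sum ! / (m.map Nat.factorial).prod :=
  Nat.eq_div_of_mul_eq_left
    (prod_ne_zero fun h => by obtain ⟨a, -, ha⟩ := mem_map.1 h; exact Nat.factorial_ne_zero a ha)
    m.multinomial_mul_prod_factorial

theorem choose_dvd_multinomial {x : ℕ} {m : Multiset ℕ} (hx : x ∈ m) :
    m.sum.choose x ∣ m.multinomial := by
  obtain ⟨t, rfl⟩ := exists_cons_of_mem hx
  rw [multinomial_cons, sum_cons]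
  exact dvd_mul_right _ _

theorem sub_one_mul_padicValNat_multinomial_add_digits_sum {p : ℕ} [Fact p.Prime]
    (m : Multiset ℕ) :
    (p - 1) * padicValNat p m.multinomial + (p.digits m.sum).sum =
      (m.map fun x => (p.digits x).sum).sum := by
  induction m using Multiset.induction_on with
  | empty => simp
  | cons x m ih =>
    rw [multinomial_cons,
      padicValNat.mul (Nat.choose_pos (Nat.le_add_right x m.sum)).ne' m.multinomial_pos.ne',
      sum_cons, map_cons, sum_cons, mul_add]
    have := sub_one_mul_padicValNat_choose_add_digits_sum (p := p) x m.sum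
    omega

end Multiset

namespace GcdAlpha

open Multiset

def powProd (ω : Multiset ℕ) : ℕ := (ω.map fun i => (i + 1) ^ i).prod

def alpha (ω : Multiset ℕ) : ℕ := ω.multinomial * powProd ω

def IsAdmissible (n : ℕ) (ω : Multiset ℕ) : Prop := ω.sum = n ∧ ∀ x ∈ ω, 0 < x ∧ x ≤ n - 2

noncomputable def gcdValue (n : ℕ) : ℕ :=
  if Odd n then 2 * mCF (n - 1) * mCF (n - 2) else mCF (n - 1) * mCF (n - 2)

theorem powProd_cons (x : ℕ) (ω : Multiset ℕ) : powProd (x ::ₘ ω) = (x + 1) ^ x * powProd ω := by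
  simp [powProd]

theorem powProd_add (ω ω' : Multiset ℕ) : powProd (ω + ω') = powProd ω * powProd ω' := by
  simp [powProd]

theorem powProd_replicate (k x : ℕ) : powProd (replicate k x) = ((x + 1) ^ x) ^ k := by
  simp [powProd]

theorem powProd_pos (ω : Multiset ℕ) : 0 < powProd ω :=
  prod_pos fun _ hx => by obtain ⟨i, -, rfl⟩ := mem_map.1 hx; positivity

theorem pow_dvd_powProd {x : ℕ} {ω : Multiset ℕ} (hx : x ∈ ω) : (x + 1) ^ x ∣ powProd ω :=
  dvd_prod (mem_map_of_mem _ hx)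

theorem not_dvd_powProd {p : ℕ} (hp : p.Prime) {ω : Multiset ℕ} (h : ∀ x ∈ ω, ¬ p ∣ x + 1) :
    ¬ p ∣ powProd ω := by
  intro hdvd
  obtain ⟨a, ha, hpa⟩ := hp.prime.exists_mem_multiset_dvd hdvd
  obtain ⟨x, hx, rfl⟩ := mem_map.1 ha
  exact h x hx (hp.dvd_of_dvd_pow hpa)

theorem two_dvd_powProd_of_odd_sum {ω : Multiset ℕ} (h : Odd ω.sum) : 2 ∣ powProd ω := by
  obtain ⟨x, hx, k, rfl⟩ : ∃ x ∈ ω, Odd x := by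
    by_contra! hall
    exact Nat.not_even_iff_odd.2 h <| even_iff_two_dvd.2 <|
      dvd_sum fun x hx => (Nat.not_odd_iff_even.1 (hall x hx)).two_dvd
  exact (dvd_pow (Dvd.intro (k + 1) (by ring)) (by omega)).trans (pow_dvd_powProd hx)

theorem alpha_pos (ω : Multiset ℕ) : 0 < alpha ω :=
  Nat.mul_pos ω.multinomial_pos (powProd_pos ω)

theorem padicValNat_alpha {p : ℕ} [Fact p.Prime] (ω : Multiset ℕ) :
    padicValNat p (alpha ω) = padicValNat p ω.multinomial + padicValNat p (powProd ω) :=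
  padicValNat.mul ω.multinomial_pos.ne' (powProd_pos ω).ne'

theorem alpha_cons_one (ω : Multiset ℕ) : alpha (1 ::ₘ ω) = 2 * (ω.sum + 1) * alpha ω := by
  rw [alpha, alpha, multinomial_cons, powProd_cons, Nat.choose_one_right]
  ring

theorem IsAdmissible.ne_zero {n : ℕ} {ω : Multiset ℕ} (hω : IsAdmissible n ω) (hn : n ≠ 0) :
    ω ≠ 0 := by
  rintro rfl
  exact hn (hω.1.symm.trans sum_zero)

theorem IsAdmissible.cons_one {n : ℕ} {ω : Multiset ℕ} (hω : IsAdmissible n ω) (hn : 2 ≤ n) :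
    IsAdmissible (n + 1) (1 ::ₘ ω) := by
  refine ⟨by rw [sum_cons, hω.1, add_comm], fun x hx => ?_⟩
  rcases mem_cons.1 hx with rfl | hx
  · omega
  · have := hω.2 x hx
    omega

theorem IsAdmissible.eq_replicate_three {ω : Multiset ℕ} (hω : IsAdmissible 3 ω) :
    ω = replicate 3 1 := by
  have hω₁ := eq_replicate_of_mem (a := 1) fun x hx => by have := hω.2 x hx; omega
  have hcard := hω.1
  rw [hω₁, sum_replicate, smul_eq_mul, mul_one] at hcard
  rwa [hcard] at hω₁

theorem alpha_replicate_three_one : alpha (replicate 3 1) = 48 := by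
  rw [show replicate 3 1 = 1 ::ₘ 1 ::ₘ 1 ::ₘ 0 from rfl, alpha_cons_one, alpha_cons_one,
    alpha_cons_one]
  rfl

theorem mCF_pred_dvd_multinomial {n : ℕ} {ω : Multiset ℕ} (hω : IsAdmissible n ω) :
    mCF (n - 1) ∣ ω.multinomial := by
  refine mCF_dvd fun p s hp hs hn => ?_
  have hps := Nat.one_lt_pow hs.ne' hp.one_lt
  obtain ⟨x, hx⟩ := exists_mem_of_ne_zero (hω.ne_zero (by omega))
  have hx' := hω.2 x hx
  refine (hp.dvd_choose_pow (n := s) (k := x) (by omega) (by omega)).trans ?_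
  rw [← hn, Nat.sub_add_cancel (by omega), ← hω.1]
  exact choose_dvd_multinomial hx

theorem mCF_sub_two_dvd_multinomial {n : ℕ} {ω : Multiset ℕ} (hω : IsAdmissible n ω) :
    mCF (n - 2) ∣ ω.multinomial := by
  refine mCF_dvd fun p s hp hs hn => ?_
  have hps := Nat.one_lt_pow hs.ne' hp.one_lt
  obtain ⟨hsum, hparts⟩ := hω
  by_cases hbig : ∃ x ∈ ω, 2 ≤ x
  · obtain ⟨x, hx, hx2⟩ := hbig
    have hxn := (hparts x hx).2
    obtain ⟨y, rfl⟩ : ∃ y, x = y + 1 := ⟨x - 1, by omega⟩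
    refine dvd_trans ?_ (choose_dvd_multinomial hx)
    rw [hsum, show n = p ^ s + 1 by omega, Nat.choose_succ_succ']
    exact dvd_add (hp.dvd_choose_pow (by omega) (by omega))
      (hp.dvd_choose_pow (by omega) (by omega))
  · push Not at hbig
    have hfac : (ω.map Nat.factorial).prod = 1 := prod_eq_one fun y hy => by
      obtain ⟨x, hx, rfl⟩ := mem_map.1 hy
      rw [show x = 1 by have := hparts x hx; have := hbig x hx; omega, Nat.factorial_one]
    rw [multinomial_eq_factorial_div, hfac, Nat.div_one, hsum]
    exact Nat.dvd_factorial hp.pos (by have := Nat.le_self_pow hs.ne' p; omega)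

theorem coprime_mCF_pred_mCF_sub_two (n : ℕ) : (mCF (n - 1)).Coprime (mCF (n - 2)) := by
  have hcop : (n - 1 + 1).Coprime (n - 2 + 1) := by
    rcases n with _ | _ | n <;> simp
  exact (hcop.coprime_dvd_left (mCF_dvd_succ _)).coprime_dvd_right (mCF_dvd_succ _)

theorem gcdValue_dvd_alpha {n : ℕ} {ω : Multiset ℕ} (hω : IsAdmissible n ω) :
    gcdValue n ∣ alpha ω := by
  have hm := (coprime_mCF_pred_mCF_sub_two n).mul_dvd_of_dvd_of_dvd
    (mCF_pred_dvd_multinomial hω) (mCF_sub_two_dvd_multinomial hω)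
  unfold gcdValue alpha
  split_ifs with hodd
  · rw [mul_assoc, mul_comm ω.multinomial]
    exact mul_dvd_mul (two_dvd_powProd_of_odd_sum (hω.1 ▸ hodd)) hm
  · exact hm.mul_right _

theorem mCF_pred_dvd_gcdValue (n : ℕ) : mCF (n - 1) ∣ gcdValue n := by
  unfold gcdValue
  split_ifs
  · exact (dvd_mul_left _ 2).mul_right _
  · exact dvd_mul_right _ _

theorem mCF_sub_two_dvd_gcdValue (n : ℕ) : mCF (n - 2) ∣ gcdValue n := by
  unfold gcdValue
  split_ifs <;> exact dvd_mul_left _ _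

theorem two_mul_mCF_sub_two_dvd_gcdValue {n : ℕ} (h : Odd n) : 2 * mCF (n - 2) ∣ gcdValue n := by
  rw [gcdValue, if_pos h, mul_right_comm]
  exact dvd_mul_right _ _

theorem padicValNat_alpha_cons_one {p : ℕ} [Fact p.Prime] {ω : Multiset ℕ}
    (hω : ¬ p ∣ ω.sum + 1) :
    padicValNat p (alpha (1 ::ₘ ω)) = padicValNat p 2 + padicValNat p (alpha ω) := by
  rw [alpha_cons_one, padicValNat.mul (by positivity) (alpha_pos ω).ne',
    padicValNat.mul two_ne_zero (by omega), padicValNat.eq_zero_of_not_dvd hω, add_zero]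

theorem isAdmissible_replicate {p s : ℕ} (hp : p.Prime) (hps : 3 ≤ p ^ (s + 1)) :
    IsAdmissible (p ^ (s + 1)) (replicate p (p ^ s)) := by
  refine ⟨by rw [sum_replicate, smul_eq_mul, pow_succ'], fun x hx => ?_⟩
  rw [eq_of_mem_replicate hx]
  rw [pow_succ'] at hps ⊢
  have hpos := pow_pos hp.pos s
  have hle : p ^ s + 2 ≤ p * p ^ s := by
    rcases Nat.lt_or_ge (p ^ s) 2 with h | h
    · rw [show p ^ s = 1 by omega] at hps ⊢
      omega
    · nlinarith [hp.two_le]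
  exact ⟨hpos, by omega⟩

theorem padicValNat_alpha_replicate {p s : ℕ} [hp : Fact p.Prime] (hps : 3 ≤ p ^ (s + 1)) :
    padicValNat p (alpha (replicate p (p ^ s))) = 1 := by
  have hp2 := hp.out.two_le
  have hmult : padicValNat p (replicate p (p ^ s)).multinomial = 1 := by
    have h := sub_one_mul_padicValNat_multinomial_add_digits_sum (p := p) (replicate p (p ^ s))
    rw [sum_replicate, smul_eq_mul, ← pow_succ', map_replicate, sum_replicate, smul_eq_mul,
      Nat.digits_sum_base_pow hp.out.one_lt, Nat.digits_sum_base_pow hp.out.one_lt] at h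
    exact Nat.eq_of_mul_eq_mul_left (by omega : 0 < p - 1) (by omega)
  have hpow : ¬ p ∣ powProd (replicate p (p ^ s)) := not_dvd_powProd hp.out fun x hx => by
    rw [eq_of_mem_replicate hx]
    rcases s with _ | s
    · rw [pow_zero]
      exact Nat.not_dvd_of_pos_of_lt two_pos (by simp at hps; omega)
    · rw [pow_succ']
      exact Nat.not_dvd_mul_add_one hp.out.one_lt _
  rw [padicValNat_alpha, hmult, padicValNat.eq_zero_of_not_dvd hpow]

/-- The partition of `Nat.ofDigits p L` into powers of `p`, with multiplicity `L[j]` for `p ^ j`. -/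
def digitsPartition (p : ℕ) : List ℕ → Multiset ℕ
  | [] => 0
  | d :: L => replicate d 1 + (digitsPartition p L).map (p * ·)

theorem sum_digitsPartition (p : ℕ) (L : List ℕ) :
    (digitsPartition p L).sum = Nat.ofDigits p L := by
  induction L with
  | nil => rfl
  | cons d L ih =>
    rw [digitsPartition, sum_add, sum_replicate, smul_eq_mul, mul_one, sum_map_mul_left, map_id',
      ih, Nat.ofDigits_cons]

theorem card_digitsPartition (p : ℕ) (L : List ℕ) : card (digitsPartition p L) = L.sum := by
  induction L with
  | nil => rfl
  | cons d L ih => simp [digitsPartition, ih]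

theorem exists_eq_pow_of_mem_digitsPartition {p x : ℕ} {L : List ℕ}
    (hx : x ∈ digitsPartition p L) : ∃ j, x = p ^ j := by
  induction L generalizing x with
  | nil => simp [digitsPartition] at hx
  | cons d L ih =>
    rcases mem_add.1 hx with hx | hx
    · exact ⟨0, by simpa using eq_of_mem_replicate hx⟩
    · obtain ⟨y, hy, rfl⟩ := mem_map.1 hx
      obtain ⟨j, rfl⟩ := ih hy
      exact ⟨j + 1, (pow_succ' p j).symm⟩

theorem padicValNat_multinomial_digitsPartition {p : ℕ} [hp : Fact p.Prime] (n : ℕ) :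
    padicValNat p (digitsPartition p (p.digits n)).multinomial = 0 := by
  have h := sub_one_mul_padicValNat_multinomial_add_digits_sum (p := p)
    (digitsPartition p (p.digits n))
  rw [map_congr (g := fun _ => 1) rfl fun x hx => ?_, map_const', sum_replicate, smul_eq_mul,
    mul_one, card_digitsPartition, sum_digitsPartition, Nat.ofDigits_digits] at h
  · have := hp.out.two_le
    exact (Nat.mul_eq_zero.1 (by omega : (p - 1) * _ = 0)).resolve_left (by omega)
  · obtain ⟨j, rfl⟩ := exists_eq_pow_of_mem_digitsPartition hx
    exact Nat.digits_sum_base_pow hp.out.one_lt j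

theorem padicValNat_powProd_digitsPartition_cons {p : ℕ} [hp : Fact p.Prime] (d : ℕ)
    (L : List ℕ) :
    padicValNat p (powProd (digitsPartition p (d :: L))) = d * padicValNat p 2 := by
  have hndvd : ¬ p ∣ powProd ((digitsPartition p L).map (p * ·)) :=
    not_dvd_powProd hp.out fun x hx => by
      obtain ⟨y, -, rfl⟩ := mem_map.1 hx
      exact Nat.not_dvd_mul_add_one hp.out.one_lt y
  rw [digitsPartition, powProd_add, powProd_replicate,
    padicValNat.mul (by positivity) (powProd_pos _).ne', padicValNat.eq_zero_of_not_dvd hndvd,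
    show ((1 + 1) ^ 1) ^ d = 2 ^ d by norm_num, padicValNat.pow, add_zero]

theorem padicValNat_alpha_digitsPartition {p n : ℕ} [hp : Fact p.Prime] (hn : n ≠ 0) :
    padicValNat p (alpha (digitsPartition p (p.digits n))) = n % p * padicValNat p 2 := by
  rw [padicValNat_alpha, padicValNat_multinomial_digitsPartition,
    Nat.digits_def' hp.out.one_lt (Nat.pos_of_ne_zero hn),
    padicValNat_powProd_digitsPartition_cons, zero_add]

theorem isAdmissible_digitsPartition {p n : ℕ} (hp : 1 < p) (hn : 3 ≤ n)
    (h₁ : ∀ s, n ≠ p ^ (s + 1)) (h₂ : ∀ s, n ≠ p ^ (s + 1) + 1) :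
    IsAdmissible n (digitsPartition p (p.digits n)) := by
  have hsum : (digitsPartition p (p.digits n)).sum = n := by
    rw [sum_digitsPartition, Nat.ofDigits_digits]
  refine ⟨hsum, fun x hx => ?_⟩
  obtain ⟨j, rfl⟩ := exists_eq_pow_of_mem_digitsPartition hx
  have hle : p ^ j ≤ n := hsum ▸ le_sum_of_mem hx
  rcases j with _ | j
  · simp only [pow_zero]
    omega
  · have := h₁ j
    have := h₂ j
    exact ⟨pow_pos (by omega) _, by omega⟩

def IsPrimeWitness (p n : ℕ) (ω : Multiset ℕ) : Prop :=
  IsAdmissible n ω ∧ p ^ padicValNat p (alpha ω) ∣ gcdValue n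

theorem exists_isPrimeWitness_prime_pow {p s : ℕ} [hp : Fact p.Prime] (hps : 3 ≤ p ^ (s + 1)) :
    ∃ ω, IsPrimeWitness p (p ^ (s + 1)) ω := by
  refine ⟨_, isAdmissible_replicate hp.out hps, ?_⟩
  have hm : mCF (p ^ (s + 1) - 1) = p := mCF_eq hp.out (s := s + 1) (by omega) (by omega)
  rw [padicValNat_alpha_replicate hps, pow_one]
  exact (dvd_of_eq hm.symm).trans (mCF_pred_dvd_gcdValue _)

theorem exists_isPrimeWitness_prime_pow_add_one {p s : ℕ} [hp : Fact p.Prime]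
    (hps : 3 ≤ p ^ (s + 1)) : ∃ ω, IsPrimeWitness p (p ^ (s + 1) + 1) ω := by
  have hndvd : ¬ p ∣ (replicate p (p ^ s)).sum + 1 := by
    rw [sum_replicate, smul_eq_mul]
    exact Nat.not_dvd_mul_add_one hp.out.one_lt _
  refine ⟨_, (isAdmissible_replicate hp.out hps).cons_one (by omega), ?_⟩
  rw [padicValNat_alpha_cons_one hndvd, padicValNat_alpha_replicate hps]
  have hm : mCF (p ^ (s + 1) + 1 - 2) = p := mCF_eq hp.out (s := s + 1) (by omega) (by omega)
  by_cases hp2 : p = 2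
  · subst hp2
    rw [padicValNat_self]
    calc 2 ^ (1 + 1) = 2 * mCF (2 ^ (s + 1) + 1 - 2) := by rw [hm]; rfl
      _ ∣ _ := two_mul_mCF_sub_two_dvd_gcdValue
        (Nat.even_pow.2 ⟨even_two, s.succ_ne_zero⟩).add_one
  · rw [padicValNat_primes hp2, zero_add, pow_one]
    exact (dvd_of_eq hm.symm).trans (mCF_sub_two_dvd_gcdValue _)

theorem isPrimeWitness_digitsPartition {p n : ℕ} [hp : Fact p.Prime] (hn : 3 ≤ n)
    (h₁ : ∀ s, n ≠ p ^ (s + 1)) (h₂ : ∀ s, n ≠ p ^ (s + 1) + 1) :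
    IsPrimeWitness p n (digitsPartition p (p.digits n)) := by
  refine ⟨isAdmissible_digitsPartition hp.out.one_lt hn h₁ h₂, ?_⟩
  rw [padicValNat_alpha_digitsPartition (by omega)]
  by_cases hp2 : p = 2
  · subst hp2
    rcases Nat.mod_two_eq_zero_or_one n with h | h
    · rw [h, zero_mul, pow_zero]
      exact one_dvd _
    · rw [h, one_mul, padicValNat_self, pow_one]
      exact (dvd_mul_right 2 _).trans (two_mul_mCF_sub_two_dvd_gcdValue (Nat.odd_iff.2 h))
  · rw [padicValNat_primes hp2, mul_zero, pow_zero]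
    exact one_dvd _

theorem exists_isPrimeWitness {p n : ℕ} (hn : 4 ≤ n) (hp : p.Prime) :
    ∃ ω, IsPrimeWitness p n ω := by
  have := Fact.mk hp
  by_cases hA : ∃ s, n = p ^ (s + 1)
  · obtain ⟨s, rfl⟩ := hA
    exact exists_isPrimeWitness_prime_pow (by omega)
  by_cases hB : ∃ s, n = p ^ (s + 1) + 1
  · obtain ⟨s, rfl⟩ := hB
    exact exists_isPrimeWitness_prime_pow_add_one (by omega)
  push Not at hA hB
  exact ⟨_, isPrimeWitness_digitsPartition (by omega) hA hB⟩

end GcdAlpha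

open GcdAlpha

/-- The gcd over all partitions `ω` of `n` with parts of size at most `n - 2` of the
numbers `α(ω) = (n! / ∏ i_j!) · ∏ (i_j + 1)^{i_j}` equals `g(n)`, where `g(3) = 48`,
`g(n) = 2·m(n-1)·m(n-2)` for odd `n > 3` and `g(n) = m(n-1)·m(n-2)` for even `n > 3`. -/
theorem gcd_alpha_partitions (n : ℕ) (hn : 3 ≤ n)
    (g : ℕ)
    (hg : g = if n = 3 then 48
      else if Odd n then 2 * mCF (n - 1) * mCF (n - 2)
      else mCF (n - 1) * mCF (n - 2))
    (α : Multiset ℕ → ℕ)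
    (hα : ∀ ω : Multiset ℕ,
      α ω = (Nat.factorial n / (ω.map Nat.factorial).prod) *
        (ω.map (fun i => (i + 1) ^ i)).prod) :
    (∀ ω : Multiset ℕ, ω.sum = n → (∀ x ∈ ω, 0 < x ∧ x ≤ n - 2) → g ∣ α ω) ∧
    (∀ d : ℕ, (∀ ω : Multiset ℕ, ω.sum = n → (∀ x ∈ ω, 0 < x ∧ x ≤ n - 2) → d ∣ α ω) →
      d ∣ g) := by
  have hα' : ∀ ω, IsAdmissible n ω → α ω = alpha ω := fun ω hω => by
    rw [hα, alpha, powProd, Multiset.multinomial_eq_factorial_div, hω.1]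
  rcases hn.eq_or_lt with rfl | hn4
  · have h48 : ∀ ω, IsAdmissible 3 ω → α ω = 48 := fun ω hω => by
      rw [hα' ω hω, hω.eq_replicate_three, alpha_replicate_three_one]
    have hadm : IsAdmissible 3 (Multiset.replicate 3 1) :=
      ⟨rfl, fun x hx => by rw [Multiset.eq_of_mem_replicate hx]; omega⟩
    rw [if_pos rfl] at hg
    subst hg
    exact ⟨fun ω h₁ h₂ => (h48 ω ⟨h₁, h₂⟩).symm ▸ dvd_rfl,
      fun d hd => h48 _ hadm ▸ hd _ hadm.1 hadm.2⟩
  · rw [if_neg hn4.ne', ← gcdValue] at hg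
    subst hg
    refine ⟨fun ω h₁ h₂ => hα' ω ⟨h₁, h₂⟩ ▸ gcdValue_dvd_alpha ⟨h₁, h₂⟩, fun d hd => ?_⟩
    exact Nat.dvd_of_forall_prime_exists_pow_padicValNat_dvd alpha (fun ω _ => (alpha_pos ω).ne')
      (fun p => exists_isPrimeWitness hn4) fun ω hω => hα' ω hω ▸ hd ω hω.1 hω.2
end

section
/- Let 0 → A →^i B →^π C → 0 be an exact sequence of abelian groups, let n be an integer, assume A has no n-torsion, and suppose there exists a homomorphism p : B → A with p ∘ i = n·id_A. Then there exists an injective homomorphism s : nC → B (where nC is the subgroup {n·c : c ∈ C} of C) satisfying π ∘ s = id and p ∘ s = 0. -/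
theorem exists_section_on_nC {A B C : Type*}
    [AddCommGroup A] [AddCommGroup B] [AddCommGroup C]
    (n : ℤ) (i : A →+ B) (π : B →+ C)
    (hi : Function.Injective i) (hπ : Function.Surjective π)
    (hexact : i.range = π.ker)
    (htor : ∀ a : A, n • a = 0 → a = 0)
    (p : B →+ A) (hpi : ∀ a : A, p (i a) = n • a)
    (S : AddSubgroup C) (hS : ∀ c : C, c ∈ S ↔ ∃ c' : C, n • c' = c) :
    ∃ s : S →+ B, Function.Injective s ∧ (∀ x : S, π (s x) = (x : C)) ∧
      (∀ x : S, p (s x) = 0) := by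
  classical
  set g : B →+ B := n • AddMonoidHom.id B - i.comp p with hg
  have hgdef : ∀ b : B, g b = n • b - i (p b) := fun b => rfl
  have key : ∀ b₁ b₂ : B, n • π b₁ = n • π b₂ → g b₁ = g b₂ := by
    intro b₁ b₂ h
    have hd : n • (b₁ - b₂) ∈ π.ker := by
      simp [AddMonoidHom.mem_ker, map_zsmul, map_sub, smul_sub, sub_eq_zero, h]
    rw [← hexact] at hd
    obtain ⟨a, ha⟩ := hd
    have hna : n • (a - p (b₁ - b₂)) = 0 := by
      have h1 : p (i a) = p (n • (b₁ - b₂)) := by rw [ha]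
      rw [hpi, map_zsmul] at h1
      rw [smul_sub, h1, sub_self]
    have heq : a = p (b₁ - b₂) := sub_eq_zero.mp (htor _ hna)
    have hzero : g (b₁ - b₂) = 0 := by
      rw [hgdef, ← ha, heq, sub_self]
    rw [map_sub, sub_eq_zero] at hzero
    exact hzero
  choose cf hcf using fun x : S => (hS x).mp x.2
  choose bf hbf using fun x : S => hπ (cf x)
  have hπbf : ∀ x : S, n • π (bf x) = (x : C) := by
    intro x; rw [hbf, hcf]
  refine ⟨AddMonoidHom.mk' (fun x => g (bf x)) ?_, ?_, ?_, ?_⟩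
  · intro x y
    have : n • π (bf (x + y)) = n • π (bf x + bf y) := by
      rw [hπbf, map_add, smul_add, hπbf, hπbf]; rfl
    show g (bf (x+y)) = g (bf x) + g (bf y)
    rw [key _ _ this, map_add]
  · intro x y hxy
    have hx : π (g (bf x)) = (x : C) := by
      rw [hgdef, map_sub, map_zsmul, hπbf]
      have : i (p (bf x)) ∈ π.ker := hexact ▸ ⟨p (bf x), rfl⟩
      rw [AddMonoidHom.mem_ker] at this
      rw [this, sub_zero]
    have hy : π (g (bf y)) = (y : C) := by
      rw [hgdef, map_sub, map_zsmul, hπbf]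
      have : i (p (bf y)) ∈ π.ker := hexact ▸ ⟨p (bf y), rfl⟩
      rw [AddMonoidHom.mem_ker] at this
      rw [this, sub_zero]
    have : (x : C) = (y : C) := by
      rw [← hx, ← hy]; exact congrArg π hxy
    exact Subtype.ext this
  · intro x
    rw [AddMonoidHom.mk'_apply, hgdef, map_sub, map_zsmul, hπbf]
    have : i (p (bf x)) ∈ π.ker := hexact ▸ ⟨p (bf x), rfl⟩
    rw [AddMonoidHom.mem_ker] at this
    rw [this, sub_zero]
  · intro x
    rw [AddMonoidHom.mk'_apply, hgdef, map_sub, map_zsmul, hpi, sub_self]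
end

section
/- Let n₁ = 2k₁ > 0 be even and n₂ = 2k₂+1 > 0 odd, and set n = n₁ + n₂. In the graded ring Z[u,v]/(u^{n₁+1}, v^{n₂+1} - u·v^{n₂}), the element (v-u)^n - v^n equals λ · u^{n₁} v^{n₂}, where λ = -C(n,1) + C(n,2) - ... - C(n, n₁-1) + C(n, n₁) = sum over j from 1 to n₁ of (-1)^j C(n,j). -/
open MvPolynomial

/-- Auxiliary computation in an arbitrary commutative ring. -/
theorem sNumber_L_aux {A : Type*} [CommRing A] (U V : A) (n₁ n₂ n : ℕ)
    (hn : n = n₁ + n₂) (hn₁pos : 0 < n₁)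
    (hU0 : U ^ (n₁ + 1) = 0) (hV1 : V ^ (n₂ + 1) = U * V ^ n₂)
    (lam : ℤ) (hlam : lam = ∑ j ∈ Finset.Icc 1 n₁, (-1 : ℤ) ^ j * (n.choose j : ℤ)) :
    (V - U) ^ n - V ^ n = (lam : A) * (U ^ n₁ * V ^ n₂) := by
  have hn₁n : n₁ ≤ n := by omega
  have hVm : ∀ m, V ^ (n₂ + m) = U ^ m * V ^ n₂ := by
    intro m
    induction m with
    | zero => simp
    | succ m ih =>
      calc V ^ (n₂ + (m + 1)) = V ^ (n₂ + m) * V := by ring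
        _ = U ^ m * (V ^ n₂ * V) := by rw [ih]; ring
        _ = U ^ m * V ^ (n₂ + 1) := by ring
        _ = U ^ m * (U * V ^ n₂) := by rw [hV1]
        _ = U ^ (m + 1) * V ^ n₂ := by ring
  have hterm : ∀ j, 1 ≤ j → j ≤ n₁ → U ^ j * V ^ (n - j) = U ^ n₁ * V ^ n₂ := by
    intro j h1 h2
    rw [show n - j = n₂ + (n₁ - j) by omega, hVm, ← mul_assoc, ← pow_add,
      show j + (n₁ - j) = n₁ by omega]
  have hzero : ∀ j, n₁ < j → U ^ j = 0 := by
    intro j hj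
    rw [show j = (n₁ + 1) + (j - (n₁ + 1)) by omega, pow_add, hU0, zero_mul]
  have hexp : (V - U) ^ n
      = ∑ j ∈ Finset.range (n + 1), (-U) ^ j * V ^ (n - j) * (n.choose j : A) := by
    rw [show V - U = -U + V by ring, add_pow]
  rw [hexp, Finset.sum_range_succ']
  simp only [pow_zero, one_mul, Nat.sub_zero, Nat.choose_zero_right, Nat.cast_one, mul_one]
  have hs : ∑ i ∈ Finset.range n, (-U) ^ (i + 1) * V ^ (n - (i + 1)) * (n.choose (i + 1) : A)
      = ∑ i ∈ Finset.range n₁, (-U) ^ (i + 1) * V ^ (n - (i + 1)) * (n.choose (i + 1) : A) := by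
    refine (Finset.sum_subset (Finset.range_subset_range.mpr hn₁n) ?_).symm
    intro i hi hni
    have h1 : n₁ < i + 1 := by
      simp only [Finset.mem_range] at hni; omega
    rw [neg_pow, hzero _ h1]
    ring
  rw [hs]
  have hterm' : ∀ i ∈ Finset.range n₁,
      (-U) ^ (i + 1) * V ^ (n - (i + 1)) * (n.choose (i + 1) : A)
      = ((-1 : A) ^ (i + 1) * (n.choose (i + 1) : A)) * (U ^ n₁ * V ^ n₂) := by
    intro i hi
    rw [Finset.mem_range] at hi
    rw [neg_pow]
    calc (-1 : A) ^ (i + 1) * U ^ (i + 1) * V ^ (n - (i + 1)) * (n.choose (i + 1) : A)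
        = ((-1 : A) ^ (i + 1) * (n.choose (i + 1) : A)) * (U ^ (i + 1) * V ^ (n - (i + 1))) := by
          ring
      _ = _ := by rw [hterm (i + 1) (by omega) (by omega)]
  rw [Finset.sum_congr rfl hterm', ← Finset.sum_mul]
  have hlam' : (lam : A) = ∑ i ∈ Finset.range n₁, (-1 : A) ^ (i + 1) * (n.choose (i + 1) : A) := by
    rw [hlam, ← Finset.Ico_add_one_right_eq_Icc, Finset.sum_Ico_eq_sum_range]
    push_cast
    simp [add_comm 1]
  rw [hlam']
  ring

/-- In `Z[u,v]/(u^{n₁+1}, v^{n₂+1} - u v^{n₂})`, the element `(v-u)^n - v^n` equals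
`λ · u^{n₁} v^{n₂}` with `λ = ∑_{j=1}^{n₁} (-1)^j C(n,j)`. -/
theorem sNumber_L (k₁ k₂ : ℕ) (hk₁ : 0 < k₁) (n₁ n₂ n : ℕ)
    (hn₁ : n₁ = 2 * k₁) (hn₂ : n₂ = 2 * k₂ + 1) (hn : n = n₁ + n₂)
    (u v : MvPolynomial (Fin 2) ℤ) (hu : u = X 0) (hv : v = X 1)
    (I : Ideal (MvPolynomial (Fin 2) ℤ))
    (hI : I = Ideal.span {u ^ (n₁ + 1), v ^ (n₂ + 1) - u * v ^ n₂})
    (lam : ℤ) (hlam : lam = ∑ j ∈ Finset.Icc 1 n₁, (-1 : ℤ) ^ j * (n.choose j : ℤ)) :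
    Ideal.Quotient.mk I ((v - u) ^ n - v ^ n) =
      Ideal.Quotient.mk I (C lam * (u ^ n₁ * v ^ n₂)) := by
  set f := Ideal.Quotient.mk I with hf
  have hU0 : (f u) ^ (n₁ + 1) = 0 := by
    rw [← map_pow, hf, Ideal.Quotient.eq_zero_iff_mem, hI]
    exact Ideal.subset_span (by simp)
  have hV1 : (f v) ^ (n₂ + 1) = f u * (f v) ^ n₂ := by
    have h0 : f (v ^ (n₂ + 1) - u * v ^ n₂) = 0 := by
      rw [hf, Ideal.Quotient.eq_zero_iff_mem, hI]
      exact Ideal.subset_span (by simp)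
    rw [map_sub, map_pow, map_mul, map_pow, sub_eq_zero] at h0
    exact h0
  have hcast : f (C lam) = (lam : MvPolynomial (Fin 2) ℤ ⧸ I) := by
    rw [show (C lam : MvPolynomial (Fin 2) ℤ) = (lam : MvPolynomial (Fin 2) ℤ) from
      eq_intCast (C : ℤ →+* MvPolynomial (Fin 2) ℤ) lam, map_intCast]
  have key := sNumber_L_aux (f u) (f v) n₁ n₂ n hn (by omega) hU0 hV1 lam hlam
  calc f ((v - u) ^ n - v ^ n) = (f v - f u) ^ n - (f v) ^ n := by
        rw [map_sub, map_pow, map_sub, map_pow]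
    _ = (lam : MvPolynomial (Fin 2) ℤ ⧸ I) * ((f u) ^ n₁ * (f v) ^ n₂) := key
    _ = f (C lam * (u ^ n₁ * v ^ n₂)) := by
        rw [map_mul, map_mul, map_pow, map_pow, hcast]
end

section
/- Let n₁ = 2k₁ > 0 be even and n₂ = 2k₂+1 ≥ 3 odd, set n = n₁+n₂+1, and work in the ring R = Z[u,v,w]/(u², v^{n₁+1}, (w-u)²(v+w)w^{n₂-2}). Then in R: (1) u·w^{n-1} = u·v^{n₁}·w^{n₂}; (2) for each 0 ≤ j ≤ n₁, v^j · w^{n-j} = (-1)^j · 2 · u · v^{n₁} · w^{n₂}. -/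
open MvPolynomial

set_option maxHeartbeats 1600000

/-- In `R = Z[u,v,w]/(u², v^{n₁+1}, (w-u)²(v+w)w^{n₂-2})` one has
`u·w^{n-1} = u·v^{n₁}·w^{n₂}` and `v^j·w^{n-j} = (-1)^j·2·u·v^{n₁}·w^{n₂}` for `0 ≤ j ≤ n₁`. -/
theorem relations_N (k₁ k₂ : ℕ) (hk₁ : 0 < k₁) (hk₂ : 1 ≤ k₂) (n₁ n₂ n : ℕ)
    (hn₁ : n₁ = 2 * k₁) (hn₂ : n₂ = 2 * k₂ + 1) (hn : n = n₁ + n₂ + 1)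
    (u v w : MvPolynomial (Fin 3) ℤ) (hu : u = X 0) (hv : v = X 1) (hw : w = X 2)
    (I : Ideal (MvPolynomial (Fin 3) ℤ))
    (hI : I = Ideal.span {u ^ 2, v ^ (n₁ + 1), (w - u) ^ 2 * (v + w) * w ^ (n₂ - 2)}) :
    (Ideal.Quotient.mk I (u * w ^ (n - 1)) =
      Ideal.Quotient.mk I (u * v ^ n₁ * w ^ n₂)) ∧
    (∀ j : ℕ, j ≤ n₁ →
      Ideal.Quotient.mk I (v ^ j * w ^ (n - j)) =
        Ideal.Quotient.mk I ((-1 : MvPolynomial (Fin 3) ℤ) ^ j * 2 *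
          (u * v ^ n₁ * w ^ n₂))) := by
  obtain ⟨l, rfl⟩ : ∃ l, k₁ = l + 1 := ⟨k₁ - 1, by omega⟩
  obtain ⟨k, rfl⟩ : ∃ k, k₂ = k + 1 := ⟨k₂ - 1, by omega⟩
  have h1 : Ideal.Quotient.mk I (u ^ 2) = 0 := by
    rw [Ideal.Quotient.eq_zero_iff_mem, hI]
    exact Ideal.subset_span (by simp)
  have h2 : Ideal.Quotient.mk I (v ^ (n₁ + 1)) = 0 := by
    rw [Ideal.Quotient.eq_zero_iff_mem, hI]
    exact Ideal.subset_span (by simp)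
  have h3 : Ideal.Quotient.mk I ((w - u) ^ 2 * (v + w) * w ^ (n₂ - 2)) = 0 := by
    rw [Ideal.Quotient.eq_zero_iff_mem, hI]
    exact Ideal.subset_span (by simp)
  simp only [map_mul, map_pow, map_sub, map_add, map_neg, map_one, map_ofNat] at h1 h2 h3 ⊢
  set U := Ideal.Quotient.mk I u with hU
  set V := Ideal.Quotient.mk I v with hV
  set W := Ideal.Quotient.mk I w with hW
  rw [show n₁ + 1 = 2 * l + 3 by omega] at h2
  rw [show n₂ - 2 = 2 * k + 1 by omega] at h3
  -- the key relation
  have key : W ^ (2 * k + 4) =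
      2 * U * W ^ (2 * k + 3) - V * W ^ (2 * k + 3) + 2 * U * V * W ^ (2 * k + 2) := by
    linear_combination h3 - (V + W) * W ^ (2 * k + 1) * h1
  have hUkey : U * W ^ (2 * k + 4) = -(U * V * W ^ (2 * k + 3)) := by
    linear_combination U * key + (2 * W ^ (2 * k + 3) + 2 * V * W ^ (2 * k + 2)) * h1
  have hw4 : W ^ (2 * k + 5) = -(V * W ^ (2 * k + 4)) := by
    linear_combination W * key + 2 * hUkey
  have hpow : ∀ m : ℕ, W ^ (2 * k + 4 + m) = (-V) ^ m * W ^ (2 * k + 4) := by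
    intro m
    induction m with
    | zero => simp
    | succ m ih => linear_combination W ^ m * hw4 + (-V) * ih
  have hkeyV : V ^ (2 * l + 2) * W ^ (2 * k + 4) =
      2 * U * V ^ (2 * l + 2) * W ^ (2 * k + 3) := by
    linear_combination V ^ (2 * l + 2) * key - (W ^ (2 * k + 3) - 2 * U * W ^ (2 * k + 2)) * h2
  have hneg1 : ∀ m : ℕ, Even m → ((-1 : MvPolynomial (Fin 3) ℤ ⧸ I)) ^ m = 1 := by
    rintro m ⟨r, rfl⟩
    induction r with
    | zero => norm_num
    | succ p ih => linear_combination ih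
  have hneg2 : ∀ m : ℕ, Odd m → ((-1 : MvPolynomial (Fin 3) ℤ ⧸ I)) ^ m = -1 := by
    rintro m ⟨r, rfl⟩
    linear_combination -hneg1 (r + r) ⟨r, rfl⟩
  have hnegpow : ∀ (a : MvPolynomial (Fin 3) ℤ ⧸ I) (m : ℕ),
      (-a) ^ m = (-1) ^ m * a ^ m := by
    intro a m
    induction m with
    | zero => norm_num
    | succ p ih => linear_combination (-a) * ih
  constructor
  · rw [show n - 1 = 2 * k + 4 + (2 * l + 1) by omega, show n₁ = 2 * l + 2 by omega,
      show n₂ = 2 * k + 3 by omega, hpow (2 * l + 1), hnegpow V (2 * l + 1),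
      hneg2 (2 * l + 1) ⟨l, by omega⟩]
    linear_combination (-(V ^ (2 * l + 1))) * hUkey
  · intro j hj
    obtain ⟨d, hd⟩ : ∃ d, 2 * l + 2 = j + d := ⟨2 * l + 2 - j, by omega⟩
    rw [show n - j = 2 * k + 4 + d by omega, show n₁ = j + d by omega,
      show n₂ = 2 * k + 3 by omega, hpow d, hnegpow V d, pow_add]
    rw [hd, pow_add] at hkeyV
    rcases Nat.even_or_odd j with hj2 | hj2
    · have hd2 : Even d := by
        obtain ⟨r, hr⟩ := hj2
        exact ⟨l + 1 - r, by omega⟩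
      rw [hneg1 j hj2, hneg1 d hd2]
      linear_combination hkeyV
    · have hd2 : Odd d := by
        obtain ⟨r, hr⟩ := hj2
        exact ⟨l - r, by omega⟩
      rw [hneg2 j hj2, hneg2 d hd2]
      linear_combination -hkeyV
end

section
/- Let Ω be a commutative ring with an additive map ∂ : Ω → Ω and elements t, V ∈ Ω satisfying ∂(ab) = a∂b + b∂a - t·∂a·∂b for all a, b ∈ Ω, ∂t = 2, ∂V = 0, and ∂∘∂ = 0. Define a*b = ab + 2V·∂a·∂b. Then for all a, b ∈ Ω, ∂(a*b) = a·∂b + ∂a·b - t·∂a·∂b = a*(∂b) + (∂a)*b - t*(∂a)*(∂b), i.e. the derived Leibniz rule ∂(a*b) = a*(∂b) + (∂a)*b - t*(∂a)*(∂b) holds. -/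
/-- For the twisted product `a*b = ab + 2V·∂a·∂b` with `∂` additive, `∂² = 0`, `∂t = 2`,
`∂V = 0` and the Leibniz rule `∂(ab) = a∂b + ∂a·b - t·∂a·∂b`, one has the derived
Leibniz rule `∂(a*b) = a*(∂b) + (∂a)*b - t*(∂a)*(∂b)`. -/
theorem twisted_leibniz {Ω : Type*} [CommRing Ω] (D : Ω →+ Ω) (t V : Ω)
    (hDD : ∀ x : Ω, D (D x) = 0) (ht : D t = 2) (hV : D V = 0)
    (hLeib : ∀ a b : Ω, D (a * b) = a * D b + D a * b - t * D a * D b)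
    (star : Ω → Ω → Ω) (hstar : ∀ a b : Ω, star a b = a * b + 2 * V * D a * D b)
    (a b : Ω) :
    D (star a b) = star a (D b) + star (D a) b - star (star t (D a)) (D b) := by
  have h2V : D (2 * V) = 0 := by
    rw [show (2 : Ω) * V = V + V by ring, map_add, hV, add_zero]
  have hDab : D (D a * D b) = 0 := by
    rw [hLeib, hDD, hDD]; ring
  have key : D (2 * V * D a * D b) = 0 := by
    rw [mul_assoc, hLeib (2 * V) (D a * D b), hDab, h2V]; ring
  simp only [hstar, map_add, key, hLeib, hDD, ht, hV]
  ring
end
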